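/- arXiv:1001.1781 — 5 statements merged into one kernel-verified Lean document; each statement's English description precedes it below -/
import Mathlib

section
/- Let C ⊆ Σ^n be any code (|Σ| = q ≥ 3) with minimum distance at least δn, let S ⊆ [n] with |S| = (1−ρ)n where ρ ≤ δ − ε, and fix a codeword c ∈ C and real α ≥ 1 − δ + ε. Then the number of error patterns e ∈ Σ^n with wt(e) = ρn, supp(e) ∩ S = ∅, for which there exists a codeword c' ≠ c with Δ(c+e, c') = (1−α)n, is at most 2^n · (q−1)^{(1−δ−α)n+1} · (q−1)^{ρn}. -/
/-!
Sort the error patterns `e` by the set `D` of `t = (1 - α) n` positions where `c + e` differs from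
its codeword `c'`; there are at most `2 ^ n` such sets. Since `c` and `c'` agree outside `D ∪ T`,
where `T = Sᶜ` is the support of `e`, the distance `d ≥ δ n` forces `#(T \ D) ≥ d - #D`. Fix `e`
on `T ∩ D` and on all but `d - #D - 1` positions of `T \ D`: two candidate codewords then differ
in fewer than `d` places, so `c'` and hence `e` are determined. Each class therefore has at most
`(q - 1) ^ (#T + t + 1 - d)` members, and `#T = ρ n`.
-/

open Finset

theorem card_le_card_sub_one_pow_of_injOn {ι F : Type*} [DecidableEq ι] [Fintype F] [Zero F]
    [DecidableEq F] {E : Finset (ι → F)} {K : Finset ι} (hnz : ∀ e ∈ E, ∀ i ∈ K, e i ≠ 0)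
    (hinj : ∀ x ∈ E, ∀ y ∈ E, (∀ i ∈ K, x i = y i) → x = y) :
    #E ≤ (Fintype.card F - 1) ^ #K := by
  calc #E ≤ #(K.pi fun _ => univ.erase (0 : F)) := by
        refine card_le_card_of_injOn (fun e i _ => e i) ?_ ?_
        · intro e he
          simpa [Finset.mem_pi] using hnz e he
        · intro x hx y hy hxy
          exact hinj x hx y hy fun i hi => congr_fun (congr_fun hxy i) hi
    _ = (Fintype.card F - 1) ^ #K := by
        simp [card_pi, card_erase_of_mem]

theorem pow_natSub_le_rpow {Q : ℝ} (hQ : 1 ≤ Q) {m k : ℕ} {x : ℝ} (hk : k ≤ m)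
    (hx : (m : ℝ) - k ≤ x) : Q ^ (m - k) ≤ Q ^ x := by
  rw [← Real.rpow_natCast, Nat.cast_sub hk]
  exact Real.rpow_le_rpow_of_exponent_le hQ hx

section

variable {ι F : Type*} [Fintype ι] [DecidableEq F]

theorem hammingDist_self_add [AddLeftCancelMonoid F] (x e : ι → F) :
    hammingDist x (x + e) = hammingNorm e := by
  simp [hammingDist, hammingNorm]

theorem hammingNorm_eq_card [Zero F] {e : ι → F} {T : Finset ι} (hT : ∀ i, e i ≠ 0 ↔ i ∈ T) :
    hammingNorm e = #T := by
  rw [hammingNorm]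
  congr 1
  ext i
  simp [hT]

theorem ne_zero_iff_mem_of_card_le [Zero F] {e : ι → F} {T : Finset ι}
    (hT : ∀ i ∉ T, e i = 0) (hcard : #T ≤ hammingNorm e) (i : ι) : e i ≠ 0 ↔ i ∈ T := by
  have hsupp : ({i | e i ≠ 0} : Finset ι) ⊆ T := fun i hi => by
    by_contra hiT
    exact (mem_filter.1 hi).2 (hT i hiT)
  rw [← eq_of_subset_of_card_le hsupp hcard, mem_filter]
  simp

variable [DecidableEq ι] [Fintype F] [AddLeftCancelMonoid F]

def errorFiber (C : Finset (ι → F)) (c : ι → F) (T D : Finset ι) : Finset (ι → F) :=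
  {e | (∀ i, e i ≠ 0 ↔ i ∈ T) ∧ ∃ c' ∈ C, c' ≠ c ∧ ∀ i, (c + e) i ≠ c' i ↔ i ∈ D}

variable {C : Finset (ι → F)} {c : ι → F} {T D : Finset ι}

theorem mem_errorFiber {e : ι → F} : e ∈ errorFiber C c T D ↔
    (∀ i, e i ≠ 0 ↔ i ∈ T) ∧ ∃ c' ∈ C, c' ≠ c ∧ ∀ i, (c + e) i ≠ c' i ↔ i ∈ D := by
  simp [errorFiber]

theorem le_card_add_card_sdiff_of_mem_errorFiber {d : ℕ}
    (hC : ∀ x ∈ C, ∀ y ∈ C, x ≠ y → d ≤ hammingDist x y) (hc : c ∈ C) {e : ι → F}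
    (he : e ∈ errorFiber C c T D) : d ≤ #D + #(T \ D) := by
  obtain ⟨hT, c', hc', hne, hD⟩ := mem_errorFiber.1 he
  calc d ≤ hammingDist c c' := hC c hc c' hc' hne.symm
    _ ≤ #(D ∪ T \ D) := by
      refine card_le_card fun i hi => ?_
      simp only [mem_filter, mem_univ, true_and] at hi
      by_contra hiDT
      simp only [union_sdiff_self_eq_union, mem_union, not_or] at hiDT
      have he : e i = 0 := not_not.1 ((hT i).not.2 hiDT.2)
      have hcc : (c + e) i = c' i := not_not.1 ((hD i).not.2 hiDT.1)
      simp only [Pi.add_apply, he, add_zero] at hcc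
      exact hi hcc
    _ ≤ #D + #(T \ D) := card_union_le _ _

theorem eq_of_mem_errorFiber_of_eqOn {d : ℕ}
    (hC : ∀ x ∈ C, ∀ y ∈ C, x ≠ y → d ≤ hammingDist x y) {H : Finset ι}
    (hH : #D + #((T \ D) \ H) < d) {x y : ι → F} (hx : x ∈ errorFiber C c T D)
    (hy : y ∈ errorFiber C c T D) (hxy : ∀ i ∈ T ∩ D ∪ H, x i = y i) : x = y := by
  obtain ⟨hxT, cx, hcx, -, hxD⟩ := mem_errorFiber.1 hx
  obtain ⟨hyT, cy, hcy, -, hyD⟩ := mem_errorFiber.1 hy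
  have hout : ∀ i ∉ T, x i = y i := fun i hi => by
    rw [not_not.1 ((hxT i).not.2 hi), not_not.1 ((hyT i).not.2 hi)]
  have hcx' : ∀ i ∉ D, c i + x i = cx i := fun i hi => not_not.1 ((hxD i).not.2 hi)
  have hcy' : ∀ i ∉ D, c i + y i = cy i := fun i hi => not_not.1 ((hyD i).not.2 hi)
  have hcc : cx = cy := by
    by_contra hne
    refine (hC cx hcx cy hcy hne).not_gt (lt_of_le_of_lt ?_ hH)
    refine (card_le_card fun i hi => ?_).trans (card_union_le D ((T \ D) \ H))
    simp only [mem_filter, mem_univ, true_and] at hi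
    by_cases hiD : i ∈ D
    · exact mem_union_left _ hiD
    have hxyi : x i ≠ y i := fun h => hi (by rw [← hcx' i hiD, ← hcy' i hiD, h])
    refine mem_union_right _ (mem_sdiff.2 ⟨mem_sdiff.2 ⟨?_, hiD⟩, fun hiH => ?_⟩)
    · by_contra hiT
      exact hxyi (hout i hiT)
    · exact hxyi (hxy i (mem_union_right _ hiH))
  funext i
  by_cases hiD : i ∈ D
  · by_cases hiT : i ∈ T
    · exact hxy i (mem_union_left _ (mem_inter.2 ⟨hiT, hiD⟩))
    · exact hout i hiT
  · exact add_left_cancel ((hcx' i hiD).trans (hcc ▸ (hcy' i hiD).symm))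

theorem card_errorFiber_le {d : ℕ} (hC : ∀ x ∈ C, ∀ y ∈ C, x ≠ y → d ≤ hammingDist x y)
    (hc : c ∈ C) (hD : #D < d) :
    #(errorFiber C c T D) ≤ (Fintype.card F - 1) ^ (#T + #D + 1 - d) := by
  obtain h | ⟨e₀, he₀⟩ := (errorFiber C c T D).eq_empty_or_nonempty
  · simp [h]
  have hdT := le_card_add_card_sdiff_of_mem_errorFiber hC hc he₀
  -- `H` leaves `d - #D - 1` positions of `T \ D` free: together with `D`, too few for two
  -- codewords to differ in.
  obtain ⟨H, hHG, hH⟩ := exists_subset_card_eq (Nat.sub_le #(T \ D) (d - #D - 1))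
  have hK : #(T ∩ D ∪ H) = #T + #D + 1 - d := by
    have hdisj : Disjoint (T ∩ D) H :=
      disjoint_of_subset_right hHG (disjoint_sdiff_inter T D).symm
    rw [card_union_of_disjoint hdisj, hH, ← card_inter_add_card_sdiff T D]
    omega
  rw [← hK]
  refine card_le_card_sub_one_pow_of_injOn (fun e he i hi => ?_)
    fun x hx y hy => eq_of_mem_errorFiber_of_eqOn hC ?_ hx hy
  · refine ((mem_errorFiber.1 he).1 i).2 ?_
    rcases mem_union.1 hi with hi | hi
    · exact (mem_inter.1 hi).1
    · exact (mem_sdiff.1 (hHG hi)).1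
  · rw [card_sdiff_of_subset hHG, hH]
    omega

theorem card_errorPatterns_le {d : ℕ} (hC : ∀ x ∈ C, ∀ y ∈ C, x ≠ y → d ≤ hammingDist x y)
    (hc : c ∈ C) {t : ℕ} (ht : t < d) {E : Finset (ι → F)}
    (hE : ∀ e ∈ E, (∀ i, e i ≠ 0 ↔ i ∈ T) ∧ ∃ c' ∈ C, c' ≠ c ∧ hammingDist (c + e) c' = t) :
    #E ≤ 2 ^ Fintype.card ι * (Fintype.card F - 1) ^ (#T + t + 1 - d) := by
  calc #E ≤ #((powersetCard t univ).biUnion (errorFiber C c T)) := by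
        refine card_le_card fun e he => ?_
        obtain ⟨hT, c', hc', hne, hdist⟩ := hE e he
        exact mem_biUnion.2 ⟨({i | (c + e) i ≠ c' i} : Finset ι),
          mem_powersetCard.2 ⟨subset_univ _, hdist⟩,
          mem_errorFiber.2 ⟨hT, c', hc', hne, fun i => by simp⟩⟩
    _ ≤ ∑ D ∈ powersetCard t univ, #(errorFiber C c T D) := card_biUnion_le
    _ ≤ ∑ D ∈ powersetCard t univ, (Fintype.card F - 1) ^ (#T + t + 1 - d) := by
        refine sum_le_sum fun D hD => ?_
        obtain rfl := (mem_powersetCard.1 hD).2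
        exact card_errorFiber_le hC hc ht
    _ = (Fintype.card ι).choose t * (Fintype.card F - 1) ^ (#T + t + 1 - d) := by
        rw [sum_const, card_powersetCard, card_univ, smul_eq_mul]
    _ ≤ 2 ^ Fintype.card ι * (Fintype.card F - 1) ^ (#T + t + 1 - d) :=
        Nat.mul_le_mul_right _ (Nat.choose_le_two_pow _ _)

theorem card_errorPatterns_le_rpow (hF : 2 ≤ Fintype.card F) {δ ε τ : ℝ} (hε : 0 < ε)
    (hτ : τ ≤ (δ - ε) * Fintype.card ι)
    (hC : ∀ x ∈ C, ∀ y ∈ C, x ≠ y → δ * Fintype.card ι ≤ hammingDist x y) (hc : c ∈ C)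
    {E : Finset (ι → F)}
    (hE : ∀ e ∈ E, (∀ i, e i ≠ 0 ↔ i ∈ T) ∧ ∃ c' ∈ C, c' ≠ c ∧ (hammingDist (c + e) c' : ℝ) = τ) :
    (#E : ℝ) ≤
      2 ^ Fintype.card ι * ((Fintype.card F : ℝ) - 1) ^ (#T + τ + 1 - δ * Fintype.card ι) := by
  have hF1 : (1 : ℝ) ≤ Fintype.card F - 1 := by
    have : (2 : ℝ) ≤ Fintype.card F := by exact_mod_cast hF
    linarith
  obtain rfl | ⟨e₀, he₀⟩ := E.eq_empty_or_nonempty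
  · have := Real.rpow_nonneg (zero_le_one.trans hF1) (#T + τ + 1 - δ * Fintype.card ι)
    simp only [card_empty, Nat.cast_zero]
    positivity
  obtain ⟨hT₀, c₀, hc₀, hne₀, hτ₀⟩ := hE e₀ he₀
  set t := hammingDist (c + e₀) c₀
  set d := ⌈δ * Fintype.card ι⌉₊
  have hCd : ∀ x ∈ C, ∀ y ∈ C, x ≠ y → d ≤ hammingDist x y :=
    fun x hx y hy hxy => Nat.ceil_le.2 (hC x hx y hy hxy)
  have htd : t < d := by
    have hN : (0 : ℝ) < Fintype.card ι := by
      exact_mod_cast (hammingDist_pos.2 hne₀).trans_le hammingDist_le_card_fintype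
    have : (t : ℝ) < δ * Fintype.card ι := by rw [hτ₀]; nlinarith
    exact_mod_cast this.trans_le (Nat.le_ceil _)
  have hdt : d ≤ #T + t := by
    calc d ≤ hammingDist c c₀ := hCd c hc c₀ hc₀ hne₀.symm
      _ ≤ hammingDist c (c + e₀) + t := hammingDist_triangle _ _ _
      _ = #T + t := by rw [hammingDist_self_add, hammingNorm_eq_card hT₀]
  have hEt := card_errorPatterns_le hCd hc htd fun e he => by
    obtain ⟨hT, c', hc', hne, hτ'⟩ := hE e he
    exact ⟨hT, c', hc', hne, by exact_mod_cast hτ'.trans hτ₀.symm⟩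
  calc (#E : ℝ) ≤ ((2 ^ Fintype.card ι * (Fintype.card F - 1) ^ (#T + t + 1 - d) : ℕ) : ℝ) :=
        mod_cast hEt
    _ = 2 ^ Fintype.card ι * ((Fintype.card F : ℝ) - 1) ^ (#T + t + 1 - d) := by
        push_cast [Nat.cast_sub (by omega : 1 ≤ Fintype.card F)]
        ring
    _ ≤ 2 ^ Fintype.card ι * ((Fintype.card F : ℝ) - 1) ^ (#T + τ + 1 - δ * Fintype.card ι) := by
        gcongr
        refine pow_natSub_le_rpow hF1 (by omega) ?_
        push_cast
        linarith [Nat.le_ceil (δ * Fintype.card ι)]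

end

theorem stmt_5_general (q n : ℕ) [NeZero q] (hq : 3 ≤ q) (δ ε ρ α : ℝ)
    (hε : 0 < ε) (hα : 1 - δ + ε ≤ α)
    (C : Finset (Fin n → ZMod q))
    (hdist : ∀ c ∈ C, ∀ c' ∈ C, c ≠ c' → δ * n ≤ (hammingDist c c' : ℝ))
    (S : Finset (Fin n)) (hS : (S.card : ℝ) = (1 - ρ) * n)
    (c : Fin n → ZMod q) (hc : c ∈ C) :
    ((Finset.univ.filter (fun e : Fin n → ZMod q =>
        ((Finset.univ.filter (fun i => e i ≠ 0)).card : ℝ) = ρ * n ∧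
        (∀ i ∈ S, e i = 0) ∧
        ∃ c' ∈ C, c' ≠ c ∧ (hammingDist (c + e) c' : ℝ) = (1 - α) * n)).card : ℝ)
      ≤ 2 ^ n * ((q : ℝ) - 1) ^ ((1 - δ - α) * n + 1) * ((q : ℝ) - 1) ^ (ρ * n) := by
  classical
  have hT : (#Sᶜ : ℝ) = ρ * n := by
    rw [card_compl, Fintype.card_fin, Nat.cast_sub (S.card_le_univ.trans_eq (Fintype.card_fin n)),
      hS]
    ring
  have hF : 2 ≤ Fintype.card (ZMod q) := by rw [ZMod.card]; omega
  have hτ : (1 - α) * n ≤ (δ - ε) * n := mul_le_mul_of_nonneg_right (by linarith) n.cast_nonneg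
  calc _ ≤ (2 : ℝ) ^ Fintype.card (Fin n) * ((Fintype.card (ZMod q) : ℝ) - 1) ^
        (#Sᶜ + (1 - α) * n + 1 - δ * Fintype.card (Fin n)) := by
        refine card_errorPatterns_le_rpow hF hε (by simpa using hτ) (by simpa using hdist) hc
          fun e he => ?_
        obtain ⟨hw, hz, c', hc', hne, hd⟩ := (mem_filter.1 he).2
        exact ⟨ne_zero_iff_mem_of_card_le (fun i hi => hz i (by simpa using hi))
          (by exact_mod_cast (hT.trans hw.symm).le), c', hc', hne, hd⟩
    _ = _ := by
        have hq' : (3 : ℝ) ≤ q := by exact_mod_cast hq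
        rw [Fintype.card_fin, ZMod.card, hT, mul_assoc, ← Real.rpow_add (by linarith)]
        ring_nf

/-- For a code of minimum distance `δn`, a fixed codeword `c`, a set `S`
of `(1−ρ)n` positions and a real `α ≥ 1−δ+ε`, the number of error patterns `e` of
weight `ρn` supported outside `S` for which some codeword `c' ≠ c` is at exactly
distance `(1−α)n` from `c+e` is at most `2^n (q−1)^{(1−δ−α)n+1} (q−1)^{ρn}`. -/
theorem stmt_5 (q n : ℕ) [NeZero q] (hq : 3 ≤ q) (δ ε ρ α : ℝ)
    (hδ : 0 < δ) (hδ1 : δ < 1) (hε : 0 < ε) (hε1 : ε < 1)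
    (hρ0 : 0 ≤ ρ) (hρ : ρ ≤ δ - ε) (hα : 1 - δ + ε ≤ α)
    (C : Finset (Fin n → ZMod q))
    (hdist : ∀ c ∈ C, ∀ c' ∈ C, c ≠ c' → δ * n ≤ (hammingDist c c' : ℝ))
    (S : Finset (Fin n)) (hS : (S.card : ℝ) = (1 - ρ) * n)
    (c : Fin n → ZMod q) (hc : c ∈ C) :
    ((Finset.univ.filter (fun e : Fin n → ZMod q =>
        ((Finset.univ.filter (fun i => e i ≠ 0)).card : ℝ) = ρ * n ∧
        (∀ i ∈ S, e i = 0) ∧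
        ∃ c' ∈ C, c' ≠ c ∧ (hammingDist (c + e) c' : ℝ) = (1 - α) * n)).card : ℝ)
      ≤ 2 ^ n * ((q : ℝ) - 1) ^ ((1 - δ - α) * n + 1) * ((q : ℝ) - 1) ^ (ρ * n) :=
  stmt_5_general q n hq δ ε ρ α hε hα C hdist S hS c hc
end

section
/- Let 0 < ε, δ < 1, let n ≥ 3/ε, and let q ≥ 2^{6/ε}. Let C be a code over alphabet Σ = {0,...,q−1} of block length n with minimum distance at least δn, let ρ ≤ δ − ε, and let S ⊆ [n] with |S| = (1−ρ)n. Then for every codeword c ∈ C, the fraction of error patterns e ∈ Σ^n with wt(e) = ρn and supp(e) ⊆ [n]∖S for which some codeword c' ≠ c lies within Hamming distance ρn of c + e is at most q^{−εn/6}. -/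
open Finset

/-!
Let `T = Sᶜ`, so `t = #T = ρn` and the admissible error patterns are exactly those with support
`T`: there are `(q-1)^t` of them. As `ρn ≤ (δ-ε)n`, distinct codewords differ in more than
`k = ⌈εn - 1⌉` positions of `S`. If `c + e` is within distance `t` of a codeword `c' ≠ c` and `D` is
the set of positions of `S` where `c` and `c'` differ, then `e` agrees with `c' - c` on some
`A ⊆ T` with `#A = #D`. Given `(D, A)`, a Singleton bound on `D` leaves at most `q^(#D - k)`
choices for `c'`, and then `e` is free only on `T \ A`; hence there are at most `2^n q^(t-k)` bad
patterns. Since `q ≥ 2^(6/ε)`, the factors `2^n` and `(q/(q-1))^t ≤ 2^n` cost `q^(εn/6)` each,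
while `q^k ≥ q^(εn/2)` as `εn ≥ 2`.
-/

section Counting

variable {ι α : Type*} [DecidableEq ι] [Fintype α]

theorem card_le_pow_of_eqOn_imp_eq {X : Finset (ι → α)} (R : Finset ι)
    (h : ∀ x ∈ X, ∀ y ∈ X, (∀ i ∈ R, x i = y i) → x = y) :
    #X ≤ Fintype.card α ^ #R := by
  calc #X ≤ #(univ : Finset (R → α)) :=
        card_le_card_of_injOn (fun x i => x i) (fun _ _ => mem_coe.2 (mem_univ _))
          fun x hx y hy hxy => h x hx y hy fun i hi => congrFun hxy ⟨i, hi⟩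
    _ = Fintype.card α ^ #R := by rw [card_univ, Fintype.card_fun, Fintype.card_coe]

variable [DecidableEq α]

theorem card_le_pow_card_sub_of_lt_card_filter_ne {X : Finset (ι → α)} (D : Finset ι) {k : ℕ}
    (h : ∀ x ∈ X, ∀ y ∈ X, x ≠ y → k < #{i ∈ D | x i ≠ y i}) :
    #X ≤ Fintype.card α ^ (#D - k) := by
  obtain ⟨K, hKD, hK⟩ := exists_subset_card_eq (min_le_right k #D)
  have hcard : #(D \ K) = #D - k := by rw [card_sdiff_of_subset hKD, hK]; omega
  rw [← hcard]
  refine card_le_pow_of_eqOn_imp_eq _ fun x hx y hy hxy => ?_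
  by_contra hne
  have hsub : {i ∈ D | x i ≠ y i} ⊆ K := fun i hi => by
    rw [mem_filter] at hi
    by_contra hiK
    exact hi.2 (hxy i (mem_sdiff.2 ⟨hi.1, hiK⟩))
  have := card_le_card hsub
  have := h x hx y hy hne
  omega

theorem card_filter_disagreement_eq_le_pow {C : Finset (ι → α)} {S : Finset ι}
    {k : ℕ} (hC : ∀ x ∈ C, ∀ y ∈ C, x ≠ y → k < #{i ∈ S | x i ≠ y i}) (c : ι → α)
    (D : Finset ι) : #{c' ∈ C | {i ∈ S | c i ≠ c' i} = D} ≤ Fintype.card α ^ (#D - k) := by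
  refine card_le_pow_card_sub_of_lt_card_filter_ne D fun x hx y hy hxy => ?_
  rw [mem_filter] at hx hy
  refine (hC x hx.1 y hy.1 hxy).trans_le (card_le_card fun i hi => ?_)
  rw [mem_filter] at hi ⊢
  refine ⟨?_, hi.2⟩
  by_contra hiD
  have hagree : ∀ z : ι → α, {i ∈ S | c i ≠ z i} = D → c i = z i := fun z hz => by
    by_contra h
    exact hiD (hz ▸ mem_filter.2 ⟨hi.1, h⟩)
  exact hi.2 ((hagree x hx.2).symm.trans (hagree y hy.2))

end Counting

section Hamming

variable {ι : Type*} [Fintype ι] [DecidableEq ι] {β : ι → Type*} [∀ i, DecidableEq (β i)]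

theorem hammingDist_eq_card_filter_add_card_filter_compl (S : Finset ι) (x y : ∀ i, β i) :
    hammingDist x y = #{i ∈ S | x i ≠ y i} + #{i ∈ Sᶜ | x i ≠ y i} := by
  simp only [hammingDist, card_filter]
  exact (sum_add_sum_compl S _).symm

theorem lt_card_filter_ne_of_add_card_compl_lt {S : Finset ι} {x y : ∀ i, β i} {k : ℕ}
    (h : k + #Sᶜ < hammingDist x y) : k < #{i ∈ S | x i ≠ y i} := by
  rw [hammingDist_eq_card_filter_add_card_filter_compl S] at h
  have := card_filter_le Sᶜ fun i => x i ≠ y i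
  omega

end Hamming

section Confusable

variable {ι α : Type*} [Fintype ι] [DecidableEq ι] [DecidableEq α]

theorem exists_subset_compl_card_eq_of_hammingDist_le [AddZeroClass α] {S : Finset ι}
    {c e c' : ι → α} (he : ∀ i ∈ S, e i = 0) (hd : hammingDist (c + e) c' ≤ #Sᶜ) :
    ∃ A ⊆ Sᶜ, #A = #{i ∈ S | c i ≠ c' i} ∧ ∀ i ∈ A, c i + e i = c' i := by
  have hS : {i ∈ S | (c + e) i ≠ c' i} = {i ∈ S | c i ≠ c' i} :=
    filter_congr fun i hi => by simp [he i hi]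
  have hsplit := hammingDist_eq_card_filter_add_card_filter_compl S (c + e) c'
  have hcompl := card_filter_add_card_filter_not (s := Sᶜ) fun i => (c + e) i ≠ c' i
  rw [hS] at hsplit
  obtain ⟨A, hA, hAcard⟩ :=
    exists_subset_card_eq (s := {i ∈ Sᶜ | ¬(c + e) i ≠ c' i}) (n := #{i ∈ S | c i ≠ c' i})
      (by omega)
  refine ⟨A, hA.trans (filter_subset _ _), hAcard, fun i hi => ?_⟩
  simpa using (mem_filter.1 (hA hi)).2

theorem card_filter_zero_and_add_eq_le_pow [Fintype α] [AddLeftCancelMonoid α] {S A : Finset ι}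
    (hA : A ⊆ Sᶜ) (c c' : ι → α) :
    #{e : ι → α | (∀ i ∈ S, e i = 0) ∧ ∀ i ∈ A, c i + e i = c' i} ≤
      Fintype.card α ^ (#Sᶜ - #A) := by
  rw [← card_sdiff_of_subset hA]
  refine card_le_pow_of_eqOn_imp_eq _ fun x hx y hy hxy => funext fun i => ?_
  simp only [mem_filter, mem_univ, true_and] at hx hy
  by_cases hiS : i ∈ S
  · rw [hx.1 i hiS, hy.1 i hiS]
  by_cases hiA : i ∈ A
  · exact add_left_cancel ((hx.2 i hiA).trans (hy.2 i hiA).symm)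
  exact hxy i (mem_sdiff.2 ⟨mem_compl.2 hiS, hiA⟩)

theorem card_confusable_mul_pow_le [Fintype α] [AddLeftCancelMonoid α] (C : Finset (ι → α))
    (S : Finset ι) (c : ι → α) {k : ℕ}
    (hC : ∀ x ∈ C, ∀ y ∈ C, x ≠ y → k < #{i ∈ S | x i ≠ y i}) :
    #{e : ι → α | (∀ i ∈ S, e i = 0) ∧
        ∃ c' ∈ C, k < #{i ∈ S | c i ≠ c' i} ∧ hammingDist (c + e) c' ≤ #Sᶜ} *
        Fintype.card α ^ k ≤
      2 ^ Fintype.card ι * Fintype.card α ^ #Sᶜ := by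
  set q := Fintype.card α
  set P := {p ∈ S.powerset ×ˢ Sᶜ.powerset | k < #p.1 ∧ #p.1 = #p.2}
  set X : Finset ι → Finset (ι → α) := fun D => {c' ∈ C | {i ∈ S | c i ≠ c' i} = D}
  set E : Finset ι → (ι → α) → Finset (ι → α) := fun A c' =>
    {e : ι → α | (∀ i ∈ S, e i = 0) ∧ ∀ i ∈ A, c i + e i = c' i}
  have hcover : ({e : ι → α | (∀ i ∈ S, e i = 0) ∧
      ∃ c' ∈ C, k < #{i ∈ S | c i ≠ c' i} ∧ hammingDist (c + e) c' ≤ #Sᶜ} : Finset (ι → α)) ⊆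
      P.biUnion fun p => (X p.1).biUnion (E p.2) := by
    intro e he
    obtain ⟨he0, c', hc', hk, hd⟩ := (mem_filter.1 he).2
    obtain ⟨A, hA, hAcard, hAe⟩ := exists_subset_compl_card_eq_of_hammingDist_le he0 hd
    simp only [mem_biUnion, mem_filter, mem_product, mem_powerset, P, X, E]
    exact ⟨(_, A), ⟨⟨filter_subset _ _, hA⟩, hk, hAcard.symm⟩, c', ⟨hc', rfl⟩, mem_univ e, he0, hAe⟩
  have hX : ∀ D, #(X D) ≤ q ^ (#D - k) := card_filter_disagreement_eq_le_pow hC c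
  have hE : ∀ A ⊆ Sᶜ, ∀ c', #(E A c') ≤ q ^ (#Sᶜ - #A) := fun A hA c' =>
    card_filter_zero_and_add_eq_le_pow hA c c'
  have hterm : ∀ p ∈ P, #((X p.1).biUnion (E p.2)) * q ^ k ≤ q ^ #Sᶜ := by
    rintro ⟨D, A⟩ hp
    simp only [P, mem_filter, mem_product, mem_powerset] at hp
    obtain ⟨⟨hD, hA⟩, hkD, hDA⟩ := hp
    have hAt := card_le_card hA
    calc #((X D).biUnion (E A)) * q ^ k ≤ (#(X D) * q ^ (#Sᶜ - #A)) * q ^ k := by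
          gcongr
          exact card_biUnion_le.trans (sum_le_card_nsmul _ _ _ fun c' _ => hE A hA c')
      _ ≤ (q ^ (#D - k) * q ^ (#Sᶜ - #A)) * q ^ k := by gcongr; exact hX D
      _ = q ^ #Sᶜ := by rw [← pow_add, ← pow_add]; congr 1; omega
  have hP : #P ≤ 2 ^ Fintype.card ι := by
    calc #P ≤ #(S.powerset ×ˢ Sᶜ.powerset) := card_filter_le _ _
      _ = 2 ^ Fintype.card ι := by
        rw [card_product, card_powerset, card_powerset, ← pow_add, card_add_card_compl]
  calc _ ≤ #(P.biUnion fun p => (X p.1).biUnion (E p.2)) * q ^ k := by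
        gcongr
    _ ≤ ∑ p ∈ P, #((X p.1).biUnion (E p.2)) * q ^ k := by
        rw [← sum_mul]; gcongr; exact card_biUnion_le
    _ ≤ ∑ p ∈ P, q ^ #Sᶜ := sum_le_sum hterm
    _ ≤ 2 ^ Fintype.card ι * q ^ #Sᶜ := by rw [sum_const, smul_eq_mul]; gcongr

end Confusable

theorem pow_card_compl_le_card_filter {ι α : Type*} [Fintype ι] [DecidableEq ι] [Fintype α]
    [DecidableEq α] [Zero α] (S : Finset ι) :
    (Fintype.card α - 1) ^ #Sᶜ ≤ #{e : ι → α | #{i | e i ≠ 0} = #Sᶜ ∧ ∀ i ∈ S, e i = 0} := by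
  calc (Fintype.card α - 1) ^ #Sᶜ
      = #(Fintype.piFinset fun i => if i ∈ S then {0} else univ.erase (0 : α)) := by
        rw [Fintype.card_piFinset]
        simp [apply_ite, prod_ite, card_erase_of_mem, compl_eq_univ_sdiff, filter_not]
    _ ≤ _ := card_le_card fun e he => by
        rw [Fintype.mem_piFinset] at he
        have hsupp : ({i | e i ≠ 0} : Finset ι) = Sᶜ := by
          ext i
          specialize he i
          split_ifs at he with hi <;> simp_all
        simp only [mem_filter, mem_univ, true_and, hsupp]
        exact fun i hi => by simpa [hi] using he i

theorem two_rpow_le_rpow_div {q s : ℝ} (hs : 0 < s) (hq : 2 ^ s ≤ q) {x : ℝ} (hx : 0 ≤ x) :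
    (2 : ℝ) ^ x ≤ q ^ (x / s) := by
  calc (2 : ℝ) ^ x = ((2 : ℝ) ^ s) ^ (x / s) := by
        rw [← Real.rpow_mul zero_le_two, mul_div_cancel₀ _ hs.ne']
    _ ≤ q ^ (x / s) := by gcongr

theorem le_rpow_neg_mul_sub_one_pow {q ε B : ℝ} {n t k : ℕ} (hε : 0 < ε) (hq2 : 2 ≤ q)
    (hq : 2 ^ (6 / ε) ≤ q) (hεn : 2 ≤ ε * n) (htn : t ≤ n) (hk : ε * n - 1 ≤ k) (hB0 : 0 ≤ B)
    (hB : B * q ^ k ≤ 2 ^ n * q ^ t) :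
    B ≤ q ^ (-(ε * n) / 6) * (q - 1) ^ t := by
  set r := q ^ (ε * n / 6)
  have hr : 0 < r := by positivity
  have h2n : (2 : ℝ) ^ n ≤ r := by
    have := two_rpow_le_rpow_div (by positivity) hq (Nat.cast_nonneg n)
    rwa [Real.rpow_natCast, div_div_eq_mul_div, mul_comm] at this
  have hr3 : r ^ 3 ≤ q ^ k := by
    rw [← Real.rpow_natCast r, ← Real.rpow_mul (by linarith), ← Real.rpow_natCast q]
    exact Real.rpow_le_rpow_of_exponent_le (by linarith) (by push_cast; linarith)
  have hq1 : 0 ≤ (q - 1) ^ t := pow_nonneg (by linarith) t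
  have hqt : q ^ t ≤ 2 ^ n * (q - 1) ^ t :=
    calc q ^ t ≤ (2 * (q - 1)) ^ t := by gcongr; linarith
      _ = 2 ^ t * (q - 1) ^ t := mul_pow _ _ _
      _ ≤ 2 ^ n * (q - 1) ^ t := by gcongr; norm_num
  have hBr : B * r ≤ (q - 1) ^ t := by
    refine le_of_mul_le_mul_right ?_ (pow_pos hr 2)
    calc B * r * r ^ 2 = B * r ^ 3 := by ring
      _ ≤ B * q ^ k := by gcongr
      _ ≤ 2 ^ n * (2 ^ n * (q - 1) ^ t) := hB.trans (by gcongr)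
      _ ≤ r * (r * (q - 1) ^ t) := by gcongr
      _ = (q - 1) ^ t * r ^ 2 := by ring
  rw [neg_div, Real.rpow_neg (by linarith), le_inv_mul_iff₀ hr, mul_comm]
  exact hBr

theorem stmt_6_general (q n : ℕ) [NeZero q] (δ ε ρ : ℝ)
    (hε : 0 < ε)
    (hn : (3 : ℝ) / ε ≤ n) (hq : (2 : ℝ) ^ (6 / ε) ≤ q)
    (hρ : ρ ≤ δ - ε)
    (C : Finset (Fin n → ZMod q))
    (hdist : ∀ c ∈ C, ∀ c' ∈ C, c ≠ c' → δ * n ≤ (hammingDist c c' : ℝ))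
    (S : Finset (Fin n)) (hS : (S.card : ℝ) = (1 - ρ) * n)
    (c : Fin n → ZMod q) (hc : c ∈ C) :
    ((Finset.univ.filter (fun e : Fin n → ZMod q =>
        ((Finset.univ.filter (fun i => e i ≠ 0)).card : ℝ) = ρ * n ∧
        (∀ i ∈ S, e i = 0) ∧
        ∃ c' ∈ C, c' ≠ c ∧ (hammingDist (c + e) c' : ℝ) ≤ ρ * n)).card : ℝ)
      ≤ (q : ℝ) ^ (-(ε * n) / 6) *
        ((Finset.univ.filter (fun e : Fin n → ZMod q =>
          ((Finset.univ.filter (fun i => e i ≠ 0)).card : ℝ) = ρ * n ∧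
          (∀ i ∈ S, e i = 0))).card : ℝ) := by
  have hεn : 3 ≤ ε * n := by rw [div_le_iff₀ hε] at hn; linarith
  have hq2 : 2 ≤ q := by
    have : (1 : ℝ) < q := (Real.one_lt_rpow one_lt_two (by positivity)).trans_le hq
    exact_mod_cast this
  have hρn : ρ * n = #Sᶜ := by
    have : (#S : ℝ) + #Sᶜ = n := by
      exact_mod_cast (Fintype.card_fin n ▸ card_add_card_compl S)
    linarith
  set k := ⌈ε * n - 1⌉₊
  have hk : (k : ℝ) < ε * n := by linarith [Nat.ceil_lt_add_one (by linarith : 0 ≤ ε * n - 1)]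
  have hsep : ∀ x ∈ C, ∀ y ∈ C, x ≠ y → k < #{i ∈ S | x i ≠ y i} := fun x hx y hy hxy =>
    lt_card_filter_ne_of_add_card_compl_lt <| by
      have := hdist x hx y hy hxy
      have : ρ * n ≤ (δ - ε) * n := mul_le_mul_of_nonneg_right hρ n.cast_nonneg
      exact_mod_cast (show (k + #Sᶜ : ℝ) < hammingDist x y by linarith)
  have htn : #Sᶜ ≤ n := (card_le_univ Sᶜ).trans_eq (Fintype.card_fin n)
  refine (le_rpow_neg_mul_sub_one_pow hε (by exact_mod_cast hq2) hq (by linarith) htn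
    (Nat.le_ceil _) (by positivity) ?_).trans ?_
  · have hcount := card_confusable_mul_pow_le C S c hsep
    rw [ZMod.card, Fintype.card_fin] at hcount
    norm_cast
    refine (Nat.mul_le_mul_right _ (card_le_card fun e he => ?_)).trans hcount
    simp only [mem_filter, mem_univ, true_and, hρn] at he ⊢
    obtain ⟨-, he0, c', hc', hne, hd⟩ := he
    exact ⟨he0, c', hc', hsep c hc c' hc' (Ne.symm hne), by exact_mod_cast hd⟩
  · have hcount := pow_card_compl_le_card_filter (α := ZMod q) S
    rw [ZMod.card] at hcount
    gcongr
    rw [← Nat.cast_pred (by omega)]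
    norm_cast
    refine hcount.trans (card_le_card fun e he => ?_)
    simp only [mem_filter, mem_univ, true_and, hρn] at he ⊢
    exact ⟨by exact_mod_cast he.1, he.2⟩

/-- Theorem 1(a): for any code of minimum distance `δn` over an alphabet
of size `q ≥ 2^{6/ε}`, any error-location set and any codeword, the fraction of error
patterns of weight `ρn` (with `ρ ≤ δ−ε`) supported on those locations for which some
other codeword lies within distance `ρn` of the received word is at most `q^{−εn/6}`. -/
theorem stmt_6 (q n : ℕ) [NeZero q] (δ ε ρ : ℝ)
    (hδ : 0 < δ) (hδ1 : δ < 1) (hε : 0 < ε) (hε1 : ε < 1)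
    (hn : (3 : ℝ) / ε ≤ n) (hq : (2 : ℝ) ^ (6 / ε) ≤ q)
    (hρ0 : 0 ≤ ρ) (hρ : ρ ≤ δ - ε)
    (C : Finset (Fin n → ZMod q))
    (hdist : ∀ c ∈ C, ∀ c' ∈ C, c ≠ c' → δ * n ≤ (hammingDist c c' : ℝ))
    (S : Finset (Fin n)) (hS : (S.card : ℝ) = (1 - ρ) * n)
    (c : Fin n → ZMod q) (hc : c ∈ C) :
    ((Finset.univ.filter (fun e : Fin n → ZMod q =>
        ((Finset.univ.filter (fun i => e i ≠ 0)).card : ℝ) = ρ * n ∧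
        (∀ i ∈ S, e i = 0) ∧
        ∃ c' ∈ C, c' ≠ c ∧ (hammingDist (c + e) c' : ℝ) ≤ ρ * n)).card : ℝ)
      ≤ (q : ℝ) ^ (-(ε * n) / 6) *
        ((Finset.univ.filter (fun e : Fin n → ZMod q =>
          ((Finset.univ.filter (fun i => e i ≠ 0)).card : ℝ) = ρ * n ∧
          (∀ i ∈ S, e i = 0))).card : ℝ) :=
  stmt_6_general q n δ ε ρ hε hn hq hρ C hdist S hS c hc
end

section
/- Let q ≥ 2, 0 ≤ ρ < 1 − 1/q, and n large enough. Let C ⊆ {0,...,q−1}^n be a code with |C| ≥ q^{(1−H_q(ρ)+γ)n} for some γ > 0. Then there exists a codeword c ∈ C such that for at least a 1 − q^{−γn+o(n)} fraction of vectors e ∈ {0,...,q−1}^n with wt(e) ≤ ρn, the Hamming ball of radius ρn around c + e (addition mod q coordinatewise) contains at least two codewords of C. -/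
/-!
Call an error `e` of weight at most `ρn` unambiguous for the codeword `c` if `c` is the only
codeword within distance `ρn` of `c + e`. A word `y` is of the form `c + e` with `e` unambiguous
for `c` for at most one codeword `c`, so the translates `c + U_c` of these sets of errors are
pairwise disjoint, `∑_{c ∈ C} |U_c| ≤ q^n`, and some codeword has
`|U_c| ≤ q^n / |C| ≤ q^{(H_q(ρ) - γ)n}`.

The ball of radius `ρn` contains the sphere of radius `k = ⌊ρn⌋`, of size `C(n,k)(q-1)^k`. Since
`C(n,k) k^k (n-k)^(n-k)` is the largest of the `n + 1` terms of `n^n = (k + (n-k))^n`, the sphere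
has at least `q^{n H_q(k/n)} / (n + 1) = q^{n H_q(ρ) - o(n)}` points, by continuity of `H_q`.
-/

open Finset Filter

/-- The `q`-ary entropy function. -/
noncomputable def qEntropy (q : ℕ) (x : ℝ) : ℝ :=
  x * Real.logb q (q - 1) - x * Real.logb q x - (1 - x) * Real.logb q (1 - x)

open Asymptotics Real

def binomTerm (n k j : ℕ) : ℕ := k ^ j * (n - k) ^ (n - j) * n.choose j

lemma binomTerm_succ_mul {n k j : ℕ} (hj : j < n) :
    binomTerm n k (j + 1) * ((j + 1) * (n - k)) = binomTerm n k j * ((n - j) * k) := by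
  have hpow : (n - k) ^ (n - j) = (n - k) ^ (n - (j + 1)) * (n - k) := by
    rw [← pow_succ]; congr 1; omega
  unfold binomTerm
  rw [hpow, pow_succ]
  calc k ^ j * k * (n - k) ^ (n - (j + 1)) * n.choose (j + 1) * ((j + 1) * (n - k))
      = k ^ j * k * (n - k) ^ (n - (j + 1)) * (n - k) * (n.choose (j + 1) * (j + 1)) := by ring
    _ = _ := by rw [Nat.choose_succ_right_eq]; ring

lemma apply_le_apply_of_unimodal {f : ℕ → ℕ} {k : ℕ} (hinc : ∀ j < k, f j ≤ f (j + 1))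
    (hdec : ∀ j ≥ k, f (j + 1) ≤ f j) (j : ℕ) : f j ≤ f k := by
  rcases le_total j k with hjk | hkj
  · clear hdec
    induction k, hjk using Nat.le_induction with
    | base => rfl
    | succ m _ ih => exact le_trans (ih fun i hi => hinc i (by omega)) (hinc m (by omega))
  · exact Nat.rel_of_forall_rel_succ_of_le_of_le (· ≥ ·) hdec le_rfl hkj

lemma binomTerm_le_binomTerm_self {n k : ℕ} (hk : k ≤ n) (j : ℕ) :
    binomTerm n k j ≤ binomTerm n k k := by
  refine apply_le_apply_of_unimodal (fun j hj => ?_) (fun j hj => ?_) j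
  · have hrec := binomTerm_succ_mul (k := k) (show j < n by omega)
    have hratio : (j + 1) * (n - k) ≤ (n - j) * k := by
      zify [hk, show j ≤ n by omega]; nlinarith
    refine Nat.le_of_mul_le_mul_right (c := (n - j) * k) ?_
      (Nat.mul_pos (by omega) (by omega))
    rw [← hrec]
    exact Nat.mul_le_mul_left _ hratio
  · rcases lt_or_ge j n with hjn | hjn
    · have hrec := binomTerm_succ_mul (k := k) hjn
      have hratio : (n - j) * k ≤ (j + 1) * (n - k) := by
        zify [hk, hjn.le]; nlinarith
      refine Nat.le_of_mul_le_mul_right (c := (j + 1) * (n - k)) ?_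
        (Nat.mul_pos (by omega) (by omega))
      rw [hrec]
      exact Nat.mul_le_mul_left _ hratio
    · simp [binomTerm, Nat.choose_eq_zero_of_lt (show n < j + 1 by omega)]

lemma sum_binomTerm {n k : ℕ} (hk : k ≤ n) : ∑ j ∈ range (n + 1), binomTerm n k j = n ^ n := by
  have := add_pow k (n - k) n
  simp only [Nat.cast_id, Nat.add_sub_cancel' hk] at this
  exact this.symm

lemma pow_self_le_succ_mul_binomTerm_self {n k : ℕ} (hk : k ≤ n) :
    n ^ n ≤ (n + 1) * binomTerm n k k := by
  calc n ^ n = ∑ j ∈ range (n + 1), binomTerm n k j := (sum_binomTerm hk).symm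
    _ ≤ ∑ _j ∈ range (n + 1), binomTerm n k k :=
        sum_le_sum fun j _ => binomTerm_le_binomTerm_self hk j
    _ = (n + 1) * binomTerm n k k := by simp

lemma qEntropy_eq_qaryEntropy_div_log (q : ℕ) (x : ℝ) :
    qEntropy q x = qaryEntropy q x / log q := by
  simp only [qEntropy, qaryEntropy, binEntropy, logb, log_inv]
  push_cast
  ring

lemma continuous_qEntropy (q : ℕ) : Continuous (qEntropy q) := by
  simp only [funext (qEntropy_eq_qaryEntropy_div_log q)]
  fun_prop

lemma natCast_mul_log_div (m : ℕ) {n : ℕ} (hn : n ≠ 0) :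
    (m : ℝ) * log (m / n) = m * log m - m * log n := by
  rcases Nat.eq_zero_or_pos m with rfl | hm
  · simp
  · rw [log_div (by positivity) (by positivity), mul_sub]

lemma mul_qEntropy_div_mul_log {q n k : ℕ} (hq : 1 < q) (hk : k ≤ n) (hn : n ≠ 0) :
    n * qEntropy q (k / n) * log q =
      k * log (q - 1) + n * log n - k * log k - (n - k : ℕ) * log (n - k : ℕ) := by
  have hlogq : log q ≠ 0 := (log_pos (by exact_mod_cast hq)).ne'
  have hsub : 1 - (k : ℝ) / n = (n - k : ℕ) / n := by
    rw [Nat.cast_sub hk]; field_simp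
  have hcast : ((n - k : ℕ) : ℝ) = n - k := Nat.cast_sub hk
  simp only [qEntropy, logb, hsub]
  field_simp
  rw [mul_sub, natCast_mul_log_div k hn, natCast_mul_log_div _ hn, hcast]
  ring

lemma mul_qEntropy_div_le_logb {q n k : ℕ} (hq : 1 < q) (hk : k ≤ n) :
    n * qEntropy q (k / n) ≤ logb q (n + 1) + logb q (n.choose k * ((q : ℝ) - 1) ^ k) := by
  rcases Nat.eq_zero_or_pos n with rfl | hn
  · obtain rfl : k = 0 := by omega
    simp
  have hq1 : (0 : ℝ) < q - 1 := by
    rw [sub_pos]; exact_mod_cast hq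
  have hchoose : (0 : ℝ) < n.choose k := by exact_mod_cast Nat.choose_pos hk
  have hterm : n * log n ≤ log (n + 1) + (k * log k + (n - k : ℕ) * log (n - k : ℕ) +
      log (n.choose k)) := by
    have hmono := log_le_log (by positivity)
      (show ((n ^ n : ℕ) : ℝ) ≤ ((n + 1) * binomTerm n k k : ℕ) by
        exact_mod_cast pow_self_le_succ_mul_binomTerm_self hk)
    have hk' : ((k ^ k : ℕ) : ℝ) ≠ 0 := by exact_mod_cast Nat.pow_self_pos.ne'
    have hnk' : (((n - k) ^ (n - k) : ℕ) : ℝ) ≠ 0 := by exact_mod_cast Nat.pow_self_pos.ne'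
    rw [binomTerm, Nat.cast_mul, Nat.cast_mul, Nat.cast_mul, log_mul (by positivity)
      (mul_ne_zero (mul_ne_zero hk' hnk') hchoose.ne'), log_mul (mul_ne_zero hk' hnk')
      hchoose.ne', log_mul hk' hnk'] at hmono
    push_cast at hmono
    simpa only [log_pow] using hmono
  have hlogq : 0 < log q := log_pos (by exact_mod_cast hq)
  rw [← mul_le_mul_iff_of_pos_right hlogq, mul_qEntropy_div_mul_log hq hk hn.ne', add_mul,
    logb, logb, div_mul_cancel₀ _ hlogq.ne', div_mul_cancel₀ _ hlogq.ne',
    log_mul hchoose.ne' (by positivity), log_pow]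
  linarith

lemma isLittleO_logb_natCast_add_one (b : ℝ) :
    (fun n : ℕ => logb b (n + 1)) =o[atTop] fun n => (n : ℝ) :=
  ((isLittleO_logb_id_atTop (b := b)).comp_tendsto
    (tendsto_atTop_add_const_right _ 1 tendsto_natCast_atTop_atTop)).trans_isBigO <|
    (isBigO_refl _ _).add (isLittleO_const_left.2 (Or.inr
      (tendsto_norm_atTop_atTop.comp tendsto_natCast_atTop_atTop))).isBigO

lemma isLittleO_natCast_mul_of_tendsto_zero {δ : ℕ → ℝ} (hδ : Tendsto δ atTop (nhds 0)) :
    (fun n : ℕ => n * δ n) =o[atTop] fun n => (n : ℝ) := by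
  simpa [mul_comm] using
    ((isLittleO_one_iff ℝ).2 hδ).mul_isBigO (isBigO_refl (fun n : ℕ => (n : ℝ)) atTop)

noncomputable def ballVolumeError (q : ℕ) (ρ : ℝ) (n : ℕ) : ℝ :=
  n * (qEntropy q ρ - qEntropy q (⌊ρ * n⌋₊ / n)) + logb q (n + 1)

lemma isLittleO_ballVolumeError (q : ℕ) {ρ : ℝ} (hρ : 0 ≤ ρ) :
    ballVolumeError q ρ =o[atTop] fun n => (n : ℝ) := by
  have hH : Tendsto (fun n : ℕ => qEntropy q (⌊ρ * n⌋₊ / n)) atTop (nhds (qEntropy q ρ)) :=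
    ((continuous_qEntropy q).tendsto ρ).comp
      ((tendsto_nat_floor_mul_div_atTop hρ).comp tendsto_natCast_atTop_atTop)
  refine (isLittleO_natCast_mul_of_tendsto_zero ?_).add (isLittleO_logb_natCast_add_one q)
  simpa using hH.const_sub (qEntropy q ρ)

lemma hammingDist_self_add_s9 {ι β : Type*} [Fintype ι] [DecidableEq β] [AddGroup β] (c e : ι → β) :
    hammingDist c (c + e) = hammingNorm e := by
  simp [hammingDist, hammingNorm]

section HammingBall

variable {ι β : Type*} [Fintype ι] [DecidableEq ι] [Fintype β] [DecidableEq β]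

noncomputable def errorBall [Zero β] (r : ℝ) : Finset (ι → β) := {e | (hammingNorm e : ℝ) ≤ r}

noncomputable def ambiguousErrors [Zero β] [Add β] (C : Finset (ι → β)) (r : ℝ) (c : ι → β) :
    Finset (ι → β) :=
  {e | (hammingNorm e : ℝ) ≤ r ∧ ∃ c₁ ∈ C, ∃ c₂ ∈ C, c₁ ≠ c₂ ∧
    (hammingDist c₁ (c + e) : ℝ) ≤ r ∧ (hammingDist c₂ (c + e) : ℝ) ≤ r}

@[simp]
lemma mem_errorBall [Zero β] {r : ℝ} {e : ι → β} : e ∈ errorBall r ↔ (hammingNorm e : ℝ) ≤ r := by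
  simp [errorBall]

@[simp]
lemma mem_ambiguousErrors [Zero β] [Add β] {C : Finset (ι → β)} {r : ℝ} {c e : ι → β} :
    e ∈ ambiguousErrors C r c ↔ (hammingNorm e : ℝ) ≤ r ∧ ∃ c₁ ∈ C, ∃ c₂ ∈ C, c₁ ≠ c₂ ∧
      (hammingDist c₁ (c + e) : ℝ) ≤ r ∧ (hammingDist c₂ (c + e) : ℝ) ≤ r := by
  simp [ambiguousErrors]

lemma errorBall_mono [Zero β] {r s : ℝ} (h : r ≤ s) :
    (errorBall r : Finset (ι → β)) ⊆ errorBall s :=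
  fun _ he => mem_errorBall.2 ((mem_errorBall.1 he).trans h)

lemma ambiguousErrors_subset_errorBall [Zero β] [Add β] (C : Finset (ι → β)) (r : ℝ)
    (c : ι → β) : ambiguousErrors C r c ⊆ errorBall r :=
  fun _ he => mem_errorBall.2 (mem_ambiguousErrors.1 he).1

lemma filter_ne_zero_eq_of_mem_piFinset [Zero β] {s : Finset ι} {e : ι → β}
    (he : e ∈ Fintype.piFinset fun i => if i ∈ s then ({0}ᶜ : Finset β) else {0}) :
    ({i | e i ≠ 0} : Finset ι) = s := by
  ext i
  have := Fintype.mem_piFinset.1 he i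
  by_cases hi : i ∈ s <;> simp_all

lemma choose_mul_pow_le_card_errorBall [Zero β] (k : ℕ) :
    (Fintype.card ι).choose k * (Fintype.card β - 1) ^ k ≤ #(errorBall k : Finset (ι → β)) := by
  let S : Finset ι → Finset (ι → β) := fun s =>
    Fintype.piFinset fun i => if i ∈ s then ({0}ᶜ : Finset β) else {0}
  have hcard : ∀ s, #(S s) = (Fintype.card β - 1) ^ #s := by
    intro s
    simp [S, Fintype.card_piFinset, apply_ite Finset.card, card_compl, prod_ite_mem]
  have hdisj : ((powersetCard k univ : Finset (Finset ι)) : Set (Finset ι)).PairwiseDisjoint S :=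
    fun s _ s' _ hss' => disjoint_left.2 fun e hs hs' => hss'
      ((filter_ne_zero_eq_of_mem_piFinset hs).symm.trans (filter_ne_zero_eq_of_mem_piFinset hs'))
  calc (Fintype.card ι).choose k * (Fintype.card β - 1) ^ k
      = #((powersetCard k univ).biUnion S) := by
        rw [card_biUnion hdisj, sum_congr rfl fun s hs => by rw [hcard, (mem_powersetCard.1 hs).2],
          sum_const, card_powersetCard, card_univ, smul_eq_mul]
    _ ≤ #(errorBall k : Finset (ι → β)) := by
        refine card_le_card fun e he => ?_
        obtain ⟨s, hs, hes⟩ := mem_biUnion.1 he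
        rw [mem_errorBall, Nat.cast_le, hammingNorm, filter_ne_zero_eq_of_mem_piFinset hes]
        exact (mem_powersetCard.1 hs).2.le

lemma rpow_sub_ballVolumeError_le_card_errorBall [Zero β] (hβ : 1 < Fintype.card β) {ρ : ℝ}
    (hρ0 : 0 ≤ ρ) (hρ1 : ρ ≤ 1) :
    (Fintype.card β : ℝ) ^ (qEntropy (Fintype.card β) ρ * Fintype.card ι -
        ballVolumeError (Fintype.card β) ρ (Fintype.card ι)) ≤
      #(errorBall (ρ * Fintype.card ι) : Finset (ι → β)) := by
  have hsub : ((Fintype.card β - 1 : ℕ) : ℝ) = Fintype.card β - 1 := by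
    rw [Nat.cast_sub hβ.le, Nat.cast_one]
  have hshell := (choose_mul_pow_le_card_errorBall (ι := ι) (β := β) ⌊ρ * Fintype.card ι⌋₊).trans
    (card_le_card (errorBall_mono (Nat.floor_le (by positivity))))
  rw [← Nat.cast_le (α := ℝ)] at hshell
  push_cast [hsub] at hshell
  set q := Fintype.card β
  set n := Fintype.card ι
  set k := ⌊ρ * n⌋₊
  have hk : k ≤ n := Nat.floor_le_of_le (mul_le_of_le_one_left n.cast_nonneg hρ1)
  have hpos : (0 : ℝ) < n.choose k * ((q : ℝ) - 1) ^ k := by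
    have : (1 : ℝ) < q := by exact_mod_cast hβ
    have : (0 : ℝ) < n.choose k := by exact_mod_cast Nat.choose_pos hk
    positivity
  refine le_trans ?_ hshell
  calc (q : ℝ) ^ (qEntropy q ρ * n - ballVolumeError q ρ n)
      = (q : ℝ) ^ (n * qEntropy q (k / n) - logb q (n + 1)) := by
        rw [ballVolumeError]; congr 1; ring
    _ ≤ (q : ℝ) ^ logb q (n.choose k * ((q : ℝ) - 1) ^ k) := by
        refine rpow_le_rpow_of_exponent_le (by exact_mod_cast hβ.le) ?_
        linarith [mul_qEntropy_div_le_logb hβ hk]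
    _ = n.choose k * ((q : ℝ) - 1) ^ k := rpow_logb (by positivity) (by exact_mod_cast hβ.ne') hpos

variable [AddGroup β] (C : Finset (ι → β)) (r : ℝ)

lemma pairwiseDisjoint_image_add_errorBall_sdiff_ambiguousErrors :
    (C : Set (ι → β)).PairwiseDisjoint
      fun c => (errorBall r \ ambiguousErrors C r c).image (c + ·) := by
  intro c hc c' hc' hne
  refine disjoint_left.2 fun y hy hy' => ?_
  obtain ⟨e, he, rfl⟩ := mem_image.1 hy
  obtain ⟨e', he', hee'⟩ := mem_image.1 hy'
  obtain ⟨heB, heA⟩ := mem_sdiff.1 he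
  have hwt := mem_errorBall.1 heB
  have hwt' := mem_errorBall.1 (mem_sdiff.1 he').1
  refine heA (mem_ambiguousErrors.2 ⟨hwt, c, hc, c', hc', hne, ?_, ?_⟩)
  · rwa [hammingDist_self_add_s9]
  · rwa [← hee', hammingDist_self_add_s9]

theorem exists_mem_card_errorBall_sub_card_ambiguousErrors_mul_card_le (hC : C.Nonempty) :
    ∃ c ∈ C, ((#(errorBall r : Finset (ι → β)) : ℝ) - #(ambiguousErrors C r c)) * #C ≤
      Fintype.card (ι → β) := by
  have hsum : ∑ c ∈ C, #(errorBall r \ ambiguousErrors C r c) ≤ Fintype.card (ι → β) :=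
    calc ∑ c ∈ C, #(errorBall r \ ambiguousErrors C r c)
        = #(C.biUnion fun c => (errorBall r \ ambiguousErrors C r c).image (c + ·)) := by
          rw [card_biUnion (pairwiseDisjoint_image_add_errorBall_sdiff_ambiguousErrors C r)]
          exact sum_congr rfl fun c _ => (card_image_of_injective _ (add_right_injective c)).symm
      _ ≤ Fintype.card (ι → β) := card_le_univ _
  obtain ⟨c, hc, hle⟩ :
      ∃ c ∈ C, #C * #(errorBall r \ ambiguousErrors C r c) ≤ Fintype.card (ι → β) := by
    refine exists_le_of_sum_le hC ?_
    rw [← mul_sum, sum_const, smul_eq_mul]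
    exact Nat.mul_le_mul_left _ hsum
  have hsub := ambiguousErrors_subset_errorBall C r c
  refine ⟨c, hc, ?_⟩
  rw [← Nat.cast_sub (card_le_card hsub), ← card_sdiff_of_subset hsub, mul_comm]
  exact_mod_cast hle

end HammingBall

theorem stmt_9_general (q : ℕ) [NeZero q] (hq : 2 ≤ q) (ρ γ : ℝ)
    (hρ0 : 0 ≤ ρ) (hρ : ρ < 1 - 1 / q) :
    ∃ f : ℕ → ℝ, f =o[atTop] (fun n => (n : ℝ)) ∧ ∃ N₀ : ℕ, ∀ n ≥ N₀,
      ∀ C : Finset (Fin n → ZMod q),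
        (q : ℝ) ^ ((1 - qEntropy q ρ + γ) * n) ≤ (C.card : ℝ) →
        ∃ c ∈ C,
          (1 - (q : ℝ) ^ (-γ * n + f n)) *
            ((Finset.univ.filter (fun e : Fin n → ZMod q =>
              ((Finset.univ.filter (fun i => e i ≠ 0)).card : ℝ) ≤ ρ * n)).card : ℝ)
          ≤ ((Finset.univ.filter (fun e : Fin n → ZMod q =>
              ((Finset.univ.filter (fun i => e i ≠ 0)).card : ℝ) ≤ ρ * n ∧
              ∃ c₁ ∈ C, ∃ c₂ ∈ C, c₁ ≠ c₂ ∧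
                (hammingDist c₁ (c + e) : ℝ) ≤ ρ * n ∧
                (hammingDist c₂ (c + e) : ℝ) ≤ ρ * n)).card : ℝ) := by
  refine ⟨ballVolumeError q ρ, isLittleO_ballVolumeError q hρ0, 0, fun n _ C hC => ?_⟩
  have hq0 : (0 : ℝ) < q := by positivity
  have hCpos : (0 : ℝ) < #C := (rpow_pos_of_pos hq0 _).trans_le hC
  obtain ⟨c, hc, hcount⟩ := exists_mem_card_errorBall_sub_card_ambiguousErrors_mul_card_le C
    (ρ * n) (card_pos.1 (by exact_mod_cast hCpos))
  refine ⟨c, hc, ?_⟩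
  change (1 - (q : ℝ) ^ (-γ * n + ballVolumeError q ρ n)) * #(errorBall (ρ * n)) ≤
    (#(ambiguousErrors C (ρ * n) c) : ℝ)
  have hvol : (q : ℝ) ^ (qEntropy q ρ * n - ballVolumeError q ρ n) ≤
      #(errorBall (ρ * n) : Finset (Fin n → ZMod q)) := by
    simpa using rpow_sub_ballVolumeError_le_card_errorBall (ι := Fin n) (β := ZMod q)
      (by rw [ZMod.card]; omega) hρ0 (hρ.le.trans (by simp))
  have hsub : (#(ambiguousErrors C (ρ * n) c) : ℝ) ≤
      #(errorBall (ρ * n) : Finset (Fin n → ZMod q)) :=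
    mod_cast card_le_card (ambiguousErrors_subset_errorBall C (ρ * n) c)
  simp only [Fintype.card_fun, ZMod.card, Fintype.card_fin, Nat.cast_pow] at hcount
  set V : ℝ := (#(errorBall (ρ * n) : Finset (Fin n → ZMod q)) : ℝ)
  set A : ℝ := (#(ambiguousErrors C (ρ * n) c) : ℝ)
  set P := (q : ℝ) ^ (-γ * n + ballVolumeError q ρ n)
  set M := (q : ℝ) ^ ((1 - qEntropy q ρ + γ) * n)
  have hsplit : (q : ℝ) ^ n = P * (q : ℝ) ^ (qEntropy q ρ * n - ballVolumeError q ρ n) * M := by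
    rw [← rpow_add hq0, ← rpow_add hq0, ← rpow_natCast]; ring_nf
  have key : (V - A) * M ≤ P * V * M :=
    calc (V - A) * M ≤ (V - A) * #C := mul_le_mul_of_nonneg_left hC (sub_nonneg.2 hsub)
      _ ≤ (q : ℝ) ^ n := hcount
      _ ≤ P * V * M := by rw [hsplit]; gcongr
  linarith [le_of_mul_le_mul_right key (rpow_pos_of_pos hq0 _)]

/-- for any code `C ⊆ {0,…,q−1}^n` of rate `1 − H_q(ρ) + γ` (`n` large
enough), there is a codeword `c ∈ C` such that for at least a `1 − q^{−γn+o(n)}`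
fraction of error patterns `e` of weight at most `ρn`, the Hamming ball of radius `ρn`
around `c + e` contains at least two codewords of `C`. -/
theorem stmt_9 (q : ℕ) [NeZero q] (hq : 2 ≤ q) (ρ γ : ℝ)
    (hρ0 : 0 ≤ ρ) (hρ : ρ < 1 - 1 / q) (hγ : 0 < γ) :
    ∃ f : ℕ → ℝ, f =o[atTop] (fun n => (n : ℝ)) ∧ ∃ N₀ : ℕ, ∀ n ≥ N₀,
      ∀ C : Finset (Fin n → ZMod q),
        (q : ℝ) ^ ((1 - qEntropy q ρ + γ) * n) ≤ (C.card : ℝ) →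
        ∃ c ∈ C,
          (1 - (q : ℝ) ^ (-γ * n + f n)) *
            ((Finset.univ.filter (fun e : Fin n → ZMod q =>
              ((Finset.univ.filter (fun i => e i ≠ 0)).card : ℝ) ≤ ρ * n)).card : ℝ)
          ≤ ((Finset.univ.filter (fun e : Fin n → ZMod q =>
              ((Finset.univ.filter (fun i => e i ≠ 0)).card : ℝ) ≤ ρ * n ∧
              ∃ c₁ ∈ C, ∃ c₂ ∈ C, c₁ ≠ c₂ ∧
                (hammingDist c₁ (c + e) : ℝ) ≤ ρ * n ∧
                (hammingDist c₂ (c + e) : ℝ) ≤ ρ * n)).card : ℝ) :=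
  stmt_9_general q hq ρ γ hρ0 hρ
end

section
/- Let k ≤ n < q with q > (n/k)^2, and let C be the Reed-Solomon code of dimension k and block length n over F_q. Then for every codeword c, for at least a 1 − q^{−Ω(k)} fraction of error patterns e of Hamming weight at most n − 4k, the only codeword of C agreeing with c + e in at least 4k positions is c itself. -/
/-!
Let `e` have weight at most `n - 4k` and let `c + e` agree with a codeword `c' ≠ c` in `4k`
positions. Then `e` agrees with `c' - c` on a set `S` of `4k` positions. The nonzero codeword
`c' - c` has fewer than `k` zeros, and the zeros of `e` inside `S` are zeros of `c' - c`, so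
of the at least `4k` zeros of `e`, at least `3k + 1` lie outside `S`. Hence `e` is pinned on
`7k + 1` positions, and summing over the `q^k` codewords and the choices of these positions
bounds the bad patterns by `q^k · C(n, 4k) · C(n - 4k, 3k + 1) · q^(n - 7k - 1)`. There are at
least `C(n, 4k) · (q - 1)^(n - 4k) ≥ C(n, 4k) · q^(n - 4k) / 3` patterns of weight `n - 4k`, and
`C(n - 4k, 3k + 1) ≤ (3n / (3k + 1))^(3k + 1) ≤ (n / k)^(3k + 1) < q^((3k + 1) / 2)`, so the
bad fraction is at most `3 q^(-(k + 1) / 2) ≤ q^(-k / 2)`.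
-/

open Polynomial Finset
open scoped Classical

section Counting

variable {ι α : Type*} [Fintype ι] [DecidableEq ι] [DecidableEq α]

theorem card_filter_forall_mem_eq [Fintype α] (W : Finset ι) (f : ι → α) :
    #{e : ι → α | ∀ i ∈ W, e i = f i} = Fintype.card α ^ (Fintype.card ι - #W) := by
  have : ({e : ι → α | ∀ i ∈ W, e i = f i} : Finset _) =
      Fintype.piFinset fun i => if i ∈ W then {f i} else univ := by
    ext e
    simp only [mem_filter, mem_univ, true_and, Fintype.mem_piFinset]
    refine forall_congr' fun i => ?_
    split_ifs <;> simp [*]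
  rw [this, Fintype.card_piFinset]
  simp [apply_ite card, prod_ite, filter_not, card_univ_sdiff]

theorem card_filter_forall_eq_zero_iff [Fintype α] [Zero α] (S : Finset ι) :
    #{e : ι → α | ∀ i, e i = 0 ↔ i ∈ S} = (Fintype.card α - 1) ^ (Fintype.card ι - #S) := by
  have : ({e : ι → α | ∀ i, e i = 0 ↔ i ∈ S} : Finset _) =
      Fintype.piFinset fun i => if i ∈ S then {0} else {0}ᶜ := by
    ext e
    simp only [mem_filter, mem_univ, true_and, Fintype.mem_piFinset]
    refine forall_congr' fun i => ?_
    split_ifs <;> simp [*]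
  rw [this, Fintype.card_piFinset]
  simp [apply_ite card, prod_ite, filter_not, card_univ_sdiff, card_compl]

theorem choose_mul_pow_le_card_hammingNorm_le [Fintype α] [Zero α] (s : ℕ) :
    (Fintype.card ι).choose s * (Fintype.card α - 1) ^ (Fintype.card ι - s) ≤
      #{e : ι → α | hammingNorm e ≤ Fintype.card ι - s} := by
  have hdisj : ((powersetCard s univ : Finset (Finset ι)) : Set (Finset ι)).PairwiseDisjoint
      fun S => ({e : ι → α | ∀ i, e i = 0 ↔ i ∈ S} : Finset _) := by
    intro S₁ _ S₂ _ hne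
    refine disjoint_left.2 fun e he₁ he₂ => hne ?_
    ext i
    rw [← (mem_filter.1 he₁).2 i, ← (mem_filter.1 he₂).2 i]
  have hsub : ((powersetCard s univ).biUnion fun S =>
      ({e : ι → α | ∀ i, e i = 0 ↔ i ∈ S} : Finset _)) ⊆
        ({e : ι → α | hammingNorm e ≤ Fintype.card ι - s} : Finset _) := by
    simp only [subset_iff, mem_biUnion, mem_powersetCard, mem_filter, mem_univ, true_and]
    rintro e ⟨S, ⟨-, rfl⟩, he⟩
    have : ({i | e i ≠ 0} : Finset ι) = Sᶜ := by ext i; simp [he]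
    rw [hammingNorm, this, card_compl]
  calc _ = ∑ S ∈ powersetCard s univ, #{e : ι → α | ∀ i, e i = 0 ↔ i ∈ S} := by
        rw [sum_congr rfl fun S hS => by
          rw [card_filter_forall_eq_zero_iff, (mem_powersetCard.1 hS).2], sum_const,
          card_powersetCard, card_univ, smul_eq_mul]
    _ = _ := (card_biUnion hdisj).symm
    _ ≤ _ := card_le_card hsub

theorem exists_pinned_of_hammingNorm_le_of_le_card_agree [AddCommGroup α] {c c' e : ι → α}
    {z s : ℕ} (hcc' : #{i | c' i = c i} ≤ z) (hwt : hammingNorm e ≤ Fintype.card ι - s)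
    (hagree : s ≤ #{i | c' i = c i + e i}) :
    ∃ S Z : Finset ι, #S = s ∧ Z ⊆ Sᶜ ∧ #Z = s - z ∧
      ∀ i ∈ S ∪ Z, e i = S.piecewise (c' - c) 0 i := by
  obtain ⟨S, hSagree, hS⟩ := exists_subset_card_eq hagree
  set zeros : Finset ι := {i | e i = 0}
  have hzeros : s ≤ #zeros := by
    have hsplit : #zeros + hammingNorm e = Fintype.card ι :=
      card_filter_add_card_filter_not (s := univ) (fun i => e i = 0)
    have := card_le_univ ({i | c' i = c i + e i} : Finset ι)
    omega
  have hzerosS : #(zeros ∩ S) ≤ z := by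
    refine le_trans (card_le_card fun i hi => ?_) hcc'
    obtain ⟨hi0, hiS⟩ := mem_inter.1 hi
    have := (mem_filter.1 (hSagree hiS)).2
    exact mem_filter.2 ⟨mem_univ _, by rw [this, (mem_filter.1 hi0).2, add_zero]⟩
  obtain ⟨Z, hZzeros, hZ⟩ := exists_subset_card_eq (s := zeros \ S) (n := s - z)
    (by have := card_sdiff_add_card_inter zeros S; omega)
  refine ⟨S, Z, hS, fun i hi => mem_compl.2 (mem_sdiff.1 (hZzeros hi)).2, hZ, fun i hi => ?_⟩
  by_cases hiS : i ∈ S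
  · rw [piecewise_eq_of_mem _ _ _ hiS, Pi.sub_apply, (mem_filter.1 (hSagree hiS)).2]
    abel
  · obtain ⟨hi0, -⟩ := mem_sdiff.1 (hZzeros ((mem_union.1 hi).resolve_left hiS))
    rw [piecewise_eq_of_notMem _ _ _ hiS, (mem_filter.1 hi0).2, Pi.zero_apply]

theorem card_hammingNorm_le_agree_le [Fintype α] [AddCommGroup α] (c c' : ι → α) {z : ℕ} (s : ℕ)
    (hcc' : #{i | c' i = c i} ≤ z) :
    #{e : ι → α | hammingNorm e ≤ Fintype.card ι - s ∧ s ≤ #{i | c' i = c i + e i}} ≤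
      (Fintype.card ι).choose s * ((Fintype.card ι - s).choose (s - z) *
        Fintype.card α ^ (Fintype.card ι - s - (s - z))) := by
  set n := Fintype.card ι
  set pinned : Finset ι → Finset ι → Finset (ι → α) := fun S Z =>
    {e | ∀ i ∈ S ∪ Z, e i = S.piecewise (c' - c) 0 i}
  have hsub : ({e : ι → α | hammingNorm e ≤ n - s ∧ s ≤ #{i | c' i = c i + e i}} : Finset _) ⊆
      (powersetCard s univ).biUnion fun S => (powersetCard (s - z) Sᶜ).biUnion (pinned S) := by
    intro e he
    obtain ⟨hwt, hagree⟩ := (mem_filter.1 he).2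
    obtain ⟨S, Z, hS, hZS, hZ, he⟩ :=
      exists_pinned_of_hammingNorm_le_of_le_card_agree hcc' hwt hagree
    simp only [mem_biUnion, mem_powersetCard, subset_univ, true_and]
    exact ⟨S, hS, Z, ⟨hZS, hZ⟩, mem_filter.2 ⟨mem_univ _, he⟩⟩
  have hpinned : ∀ S ∈ powersetCard s univ, ∀ Z ∈ powersetCard (s - z) Sᶜ,
      #(pinned S Z) = Fintype.card α ^ (n - s - (s - z)) := by
    intro S hS Z hZ
    obtain ⟨hZS, hZ⟩ := mem_powersetCard.1 hZ
    rw [card_filter_forall_mem_eq, card_union_of_disjoint (disjoint_left.2 fun i hiS hiZ =>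
      mem_compl.1 (hZS hiZ) hiS), (mem_powersetCard.1 hS).2, hZ, Nat.sub_sub]
  calc _ ≤ _ := card_le_card hsub
    _ ≤ ∑ S ∈ powersetCard s univ, #((powersetCard (s - z) Sᶜ).biUnion (pinned S)) :=
        card_biUnion_le
    _ ≤ ∑ S ∈ powersetCard s univ, ∑ Z ∈ powersetCard (s - z) Sᶜ, #(pinned S Z) :=
        sum_le_sum fun S _ => card_biUnion_le
    _ = _ := by
        rw [sum_congr rfl fun S hS => by
          rw [sum_congr rfl (hpinned S hS), sum_const, card_powersetCard, card_compl,
            (mem_powersetCard.1 hS).2, smul_eq_mul],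
          sum_const, card_powersetCard, card_univ, smul_eq_mul]

theorem card_hammingNorm_le_exists_ne_agree_le [Fintype α] [AddCommGroup α] (C : Set (ι → α))
    (c : ι → α) {z : ℕ} (s : ℕ) (hC : ∀ c' ∈ C, c' ≠ c → #{i | c' i = c i} ≤ z) :
    #{e : ι → α | hammingNorm e ≤ Fintype.card ι - s ∧
        ∃ c' ∈ C, s ≤ #{i | c' i = c i + e i} ∧ c' ≠ c} ≤
      #{c' | c' ∈ C} * ((Fintype.card ι).choose s * ((Fintype.card ι - s).choose (s - z) *
        Fintype.card α ^ (Fintype.card ι - s - (s - z)))) := by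
  have hsub : ({e : ι → α | hammingNorm e ≤ Fintype.card ι - s ∧
        ∃ c' ∈ C, s ≤ #{i | c' i = c i + e i} ∧ c' ≠ c} : Finset _) ⊆
      ({c' | c' ∈ C ∧ c' ≠ c} : Finset _).biUnion fun c' =>
        {e | hammingNorm e ≤ Fintype.card ι - s ∧ s ≤ #{i | c' i = c i + e i}} := by
    intro e he
    obtain ⟨hwt, c', hc', hagree, hne⟩ := (mem_filter.1 he).2
    exact mem_biUnion.2
      ⟨c', mem_filter.2 ⟨mem_univ _, hc', hne⟩, mem_filter.2 ⟨mem_univ _, hwt, hagree⟩⟩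
  calc _ ≤ _ := card_le_card hsub
    _ ≤ _ := card_biUnion_le_card_mul _ _ _ fun c' hc' =>
        card_hammingNorm_le_agree_le c c' s (hC c' (mem_filter.1 hc').2.1 (mem_filter.1 hc').2.2)
    _ ≤ _ := by gcongr; exact And.left

end Counting

open Nat in
theorem choose_le_exp_mul_div_pow (m j : ℕ) :
    (m.choose j : ℝ) ≤ (Real.exp 1 * m / j) ^ j := by
  rcases j.eq_zero_or_pos with rfl | hj
  · simp
  have hfact : (j : ℝ) ^ j ≤ Real.exp j * j ! := by
    have := Real.pow_div_factorial_le_exp (j : ℝ) j.cast_nonneg j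
    rwa [div_le_iff₀ (by positivity)] at this
  calc (m.choose j : ℝ) ≤ m ^ j / j ! := choose_le_pow_div j m
    _ ≤ Real.exp j * m ^ j / j ^ j := by
        rw [div_le_div_iff₀ (by positivity) (by positivity)]
        nlinarith [pow_nonneg (m.cast_nonneg : (0 : ℝ) ≤ m) j]
    _ = (Real.exp 1 * m / j) ^ j := by rw [div_pow, mul_pow, Real.exp_one_pow]

theorem pow_le_three_mul_sub_one_pow {q : ℝ} {m : ℕ} (hm : (m : ℝ) + 1 ≤ q) :
    q ^ m ≤ 3 * (q - 1) ^ m := by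
  rcases m.eq_zero_or_pos with rfl | hm0
  · norm_num
  have hq1 : 0 < q - 1 := by have : (1 : ℝ) ≤ m := mod_cast hm0; linarith
  have hexp : (1 + 1 / (q - 1)) ^ m ≤ 3 := calc
    (1 + 1 / (q - 1)) ^ m ≤ Real.exp (1 / (q - 1)) ^ m := by
      gcongr
      linarith [Real.add_one_le_exp (1 / (q - 1))]
    _ = Real.exp (m / (q - 1)) := by rw [← Real.exp_nat_mul, mul_one_div]
    _ ≤ Real.exp 1 := Real.exp_le_exp.2 ((div_le_one hq1).2 (by linarith))
    _ ≤ 3 := Real.exp_one_lt_three.le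
  calc q ^ m = (1 + 1 / (q - 1)) ^ m * (q - 1) ^ m := by
        rw [← mul_pow]; congr 1; field_simp; ring
    _ ≤ 3 * (q - 1) ^ m := by gcongr

theorem choose_mul_sq_pow_sub_le {r : ℝ} (hr : 0 < r) {m j : ℕ}
    (hC : (m.choose j : ℝ) ≤ r ^ j) :
    (m.choose j : ℝ) * (r ^ 2) ^ (m - j) ≤ (r ^ 2) ^ m / r ^ j := by
  rcases le_or_gt j m with hjm | hjm
  · rw [le_div_iff₀ (by positivity)]
    calc (m.choose j : ℝ) * (r ^ 2) ^ (m - j) * r ^ j ≤ r ^ j * (r ^ 2) ^ (m - j) * r ^ j := by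
          gcongr
      _ = (r ^ 2) ^ m := by
          rw [← pow_mul, ← pow_mul, ← pow_add, ← pow_add]; congr 1
          rw [Nat.mul_sub]; omega
  · rw [Nat.choose_eq_zero_of_lt hjm, Nat.cast_zero, zero_mul]
    positivity

theorem pow_mul_choose_mul_pow_le_rpow_mul_sub_one_pow {n k q : ℕ} (hk : 1 ≤ k)
    (h4k : 4 * k ≤ n) (hnq : n < q) (hq : ((n : ℝ) / k) ^ 2 < q) :
    (q : ℝ) ^ k * ((n - 4 * k).choose (3 * k + 1) * (q : ℝ) ^ (n - 4 * k - (3 * k + 1))) ≤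
      (q : ℝ) ^ (-(1 / 2 * k : ℝ)) * ((q : ℝ) - 1) ^ (n - 4 * k) := by
  set r := Real.sqrt q
  have hrq : r ^ 2 = q := Real.sq_sqrt q.cast_nonneg
  have hk0 : (0 : ℝ) < k := by exact_mod_cast hk
  have hnkr : (n : ℝ) / k < r := (Real.lt_sqrt (by positivity)).2 hq
  have h4nk : (4 : ℝ) ≤ n / k := by rw [le_div_iff₀ hk0]; exact_mod_cast h4k
  have hr : 0 < r := by linarith
  have hC : ((n - 4 * k).choose (3 * k + 1) : ℝ) ≤ r ^ (3 * k + 1) := by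
    refine (choose_le_exp_mul_div_pow _ _).trans (pow_le_pow_left₀ (by positivity) ?_ _)
    have hm : ((n - 4 * k : ℕ) : ℝ) ≤ n := by exact_mod_cast n.sub_le _
    have he := Real.exp_one_lt_three
    calc Real.exp 1 * ((n - 4 * k : ℕ) : ℝ) / ((3 * k + 1 : ℕ) : ℝ) ≤ 3 * n / (3 * k) := by
          push_cast
          gcongr
          linarith
      _ = n / k := by field_simp
      _ ≤ r := hnkr.le
  have hε : (q : ℝ) ^ (-(1 / 2 * k : ℝ)) = (r ^ k)⁻¹ := by
    rw [Real.rpow_neg q.cast_nonneg, show r = (q : ℝ) ^ (1 / 2 : ℝ) from Real.sqrt_eq_rpow _,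
      ← Real.rpow_natCast, ← Real.rpow_mul q.cast_nonneg, mul_comm]
  have hqm : (q : ℝ) ^ (n - 4 * k) ≤ 3 * ((q : ℝ) - 1) ^ (n - 4 * k) :=
    pow_le_three_mul_sub_one_pow (by exact_mod_cast (by omega : n - 4 * k + 1 ≤ q))
  rw [hε, ← hrq]
  rw [← hrq] at hqm
  calc (r ^ 2) ^ k * ((n - 4 * k).choose (3 * k + 1) * (r ^ 2) ^ (n - 4 * k - (3 * k + 1)))
      ≤ (r ^ 2) ^ k * ((r ^ 2) ^ (n - 4 * k) / r ^ (3 * k + 1)) := by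
        gcongr; exact choose_mul_sq_pow_sub_le hr hC
    _ = (r ^ 2) ^ (n - 4 * k) / r / r ^ k := by field_simp; ring
    _ ≤ 3 * (r ^ 2 - 1) ^ (n - 4 * k) / r / r ^ k := by gcongr
    _ ≤ 3 * (r ^ 2 - 1) ^ (n - 4 * k) / 3 / r ^ k := by
        have : 0 ≤ r ^ 2 - 1 := by nlinarith
        gcongr
        linarith
    _ = (r ^ k)⁻¹ * (r ^ 2 - 1) ^ (n - 4 * k) := by field_simp

section ReedSolomon

variable {ι F : Type*} [Fintype ι] [Field F]

def reedSolomon (a : ι → F) (k : ℕ) : Set (ι → F) :=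
  {v | ∃ p : F[X], p.degree < k ∧ ∀ i, v i = p.eval (a i)}

theorem card_agree_le_of_mem_reedSolomon [DecidableEq F] {a : ι → F}
    (ha : Function.Injective a) {k : ℕ} {c c' : ι → F} (hc : c ∈ reedSolomon a k)
    (hc' : c' ∈ reedSolomon a k) (hne : c' ≠ c) :
    #{i | c' i = c i} ≤ k - 1 := by
  obtain ⟨p, hp, hpc⟩ := hc
  obtain ⟨p', hp', hpc'⟩ := hc'
  have hsub : p' - p ≠ 0 := fun h => hne <| funext fun i => by
    rw [hpc, hpc', sub_eq_zero.1 h]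
  have hdeg : (p' - p).natDegree < k :=
    (natDegree_lt_iff_degree_lt hsub).2 ((degree_sub_le _ _).trans_lt (max_lt hp' hp))
  have hroots : (({i | c' i = c i} : Finset ι).image a).val ⊆ (p' - p).roots := by
    intro x hx
    obtain ⟨i, hi, rfl⟩ := mem_image.1 hx
    rw [mem_roots hsub, IsRoot, eval_sub, ← hpc, ← hpc', (mem_filter.1 hi).2, sub_self]
  calc #{i | c' i = c i} = #(({i | c' i = c i} : Finset ι).image a) :=
        (card_image_of_injective _ ha).symm
    _ ≤ (p' - p).natDegree := card_le_degree_of_subset_roots hroots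
    _ ≤ k - 1 := by omega

theorem card_reedSolomon_le [DecidableEq ι] [Fintype F] (a : ι → F) (k : ℕ) :
    #{v | v ∈ reedSolomon a k} ≤ Fintype.card F ^ k := by
  have hsub : ({v | v ∈ reedSolomon a k} : Finset (ι → F)) ⊆
      univ.image fun x : Fin k → F => fun i => ((degreeLTEquiv F k).symm x : F[X]).eval (a i) := by
    intro v hv
    obtain ⟨p, hp, hpv⟩ := (mem_filter.1 hv).2
    refine mem_image.2 ⟨degreeLTEquiv F k ⟨p, mem_degreeLT.2 hp⟩, mem_univ _, funext fun i => ?_⟩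
    rw [LinearEquiv.symm_apply_apply, hpv]
  calc _ ≤ _ := card_le_card hsub
    _ ≤ #(univ : Finset (Fin k → F)) := card_image_le
    _ = Fintype.card F ^ k := by simp

theorem card_hammingNorm_le_exists_ne_agree_reedSolomon_le [Fintype F] [DecidableEq F]
    {n k : ℕ} (hk : 1 ≤ k) (h4k : 4 * k ≤ n) (hnq : n < Fintype.card F)
    (hq : ((n : ℝ) / k) ^ 2 < Fintype.card F)
    {a : Fin n → F} (ha : Function.Injective a) {c : Fin n → F} (hc : c ∈ reedSolomon a k) :
    (#{e : Fin n → F | hammingNorm e ≤ n - 4 * k ∧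
        ∃ c' ∈ reedSolomon a k, 4 * k ≤ #{i | c' i = c i + e i} ∧ c' ≠ c} : ℝ) ≤
      (Fintype.card F : ℝ) ^ (-(1 / 2 * k : ℝ)) *
        #{e : Fin n → F | hammingNorm e ≤ n - 4 * k} := by
  set q := Fintype.card F
  have hbad := card_hammingNorm_le_exists_ne_agree_le (reedSolomon a k) c (4 * k)
    fun c' hc' hne => card_agree_le_of_mem_reedSolomon ha hc hc' hne
  have hweight := choose_mul_pow_le_card_hammingNorm_le (ι := Fin n) (α := F) (4 * k)
  rw [Fintype.card_fin, show 4 * k - (k - 1) = 3 * k + 1 by omega] at hbad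
  rw [Fintype.card_fin] at hweight
  have hcode := card_reedSolomon_le a k
  have hq1 : ((q - 1 : ℕ) : ℝ) = q - 1 := Nat.cast_pred Fintype.card_pos
  set N := n.choose (4 * k)
  set M := (n - 4 * k).choose (3 * k + 1) * q ^ (n - 4 * k - (3 * k + 1))
  calc _ ≤ (#{c' | c' ∈ reedSolomon a k} : ℝ) * (N * M) := by exact_mod_cast hbad
    _ ≤ (q : ℝ) ^ k * (N * M) := by gcongr; exact_mod_cast hcode
    _ = N * ((q : ℝ) ^ k * M) := by ring
    _ ≤ N * ((q : ℝ) ^ (-(1 / 2 * k : ℝ)) * ((q : ℝ) - 1) ^ (n - 4 * k)) := by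
        gcongr ?_ * ?_
        push_cast [M]
        exact pow_mul_choose_mul_pow_le_rpow_mul_sub_one_pow hk h4k hnq hq
    _ = (q : ℝ) ^ (-(1 / 2 * k : ℝ)) * ((N * (q - 1) ^ (n - 4 * k) : ℕ) : ℝ) := by
        push_cast [hq1]; ring
    _ ≤ _ := mul_le_mul_of_nonneg_left (by exact_mod_cast hweight) (by positivity)

end ReedSolomon

/-- Corollary 1: there is an absolute constant `c₀ > 0` such that for
any Reed-Solomon code of dimension `k` and block length `n` over `F_q` with
`q > (n/k)²`, for every codeword `c`, for at least a `1 − q^{−c₀ k}` fraction of error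
patterns `e` of Hamming weight at most `n − 4k`, the only codeword agreeing with
`c + e` in at least `4k` positions is `c` itself. -/
theorem stmt_12 :
    ∃ c₀ : ℝ, 0 < c₀ ∧
      ∀ (F : Type) [Field F] [Fintype F] [DecidableEq F] (n k : ℕ),
        1 ≤ k → 4 * k ≤ n → n < Fintype.card F →
        ((n : ℝ) / k) ^ 2 < (Fintype.card F : ℝ) →
        ∀ (a : Fin n → F), Function.Injective a →
        ∀ (RS : Set (Fin n → F)),
          RS = {v : Fin n → F | ∃ p : F[X], p.degree < k ∧ ∀ i, v i = p.eval (a i)} →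
        ∀ c ∈ RS,
          (1 - (Fintype.card F : ℝ) ^ (-(c₀ * k))) *
            ((Finset.univ.filter (fun e : Fin n → F =>
              (Finset.univ.filter (fun i => e i ≠ 0)).card ≤ n - 4 * k)).card : ℝ)
          ≤ ((Finset.univ.filter (fun e : Fin n → F =>
              (Finset.univ.filter (fun i => e i ≠ 0)).card ≤ n - 4 * k ∧
              ∀ c' ∈ RS,
                4 * k ≤ (Finset.univ.filter (fun i => c' i = c i + e i)).card →
                c' = c)).card : ℝ) := by
  refine ⟨1 / 2, by norm_num, ?_⟩
  rintro F _ _ _ n k hk h4k hnq hq a ha RS rfl c hc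
  have hbad := card_hammingNorm_le_exists_ne_agree_reedSolomon_le hk h4k hnq hq ha hc
  have hsplit := card_filter_add_card_filter_not
    (s := ({e : Fin n → F | hammingNorm e ≤ n - 4 * k} : Finset _))
    (fun e => ∀ c' ∈ reedSolomon a k, 4 * k ≤ #{i | c' i = c i + e i} → c' = c)
  simp only [filter_filter, not_forall, exists_prop, ← ne_eq] at hsplit
  show _ * (#{e : Fin n → F | hammingNorm e ≤ n - 4 * k} : ℝ) ≤ #{e : Fin n → F |
    hammingNorm e ≤ n - 4 * k ∧ ∀ c' ∈ reedSolomon a k, 4 * k ≤ #{i | c' i = c i + e i} → c' = c}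
  rw [← hsplit] at hbad ⊢
  push_cast at hbad ⊢
  linarith
end

section
/- Let c^1, ..., c^J be codewords of a code C over F_{q^n} of block length N forming a (d, F_q)-independent tuple with witness sets S_1,...,S_J ⊆ [N] (|S_j| = d_j), and let G_1,...,G_N be independent uniformly random n × n matrices over F_q. For any fixed word y ∈ (F_q ∪ {?})^{nN}, the events E_j = '(c^j G) agrees with y at all unerased positions within the segments indexed by S_j' are mutually independent, where c^j G denotes the concatenated encoding (c^j_1 G_1, ..., c^j_N G_N). -/
/-!
For a fixed coordinate `i`, the vectors `c^j_i` with `j ∈ A` and `i ∈ S_j` are linearly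
independent, so `M ↦ (c^j_i M)_j` is a surjective linear map and every fibre has the same size:
under a uniform `G_i` the images `c^j_i G_i` are independent and uniform. Since the `G_i` are
independent too, the size of `⋂_{j ∈ A} E_j` is `|Mat|^N ∏_i ρ_i ^ #{j ∈ A | i ∈ S_j}`, where
`ρ_i` is the fraction of vectors agreeing with `y` on segment `i`; regrouping the product by `j`
gives `|Mat|^N ∏_{j ∈ A} ∏_{i ∈ S_j} ρ_i`, and the case `A = {j}` identifies each inner product
with the probability of `E_j`.
-/

open Finset Matrix

theorem linearIndepOn_of_notMem_span_image_Iio {K V κ : Type*} [DivisionRing K] [AddCommGroup V]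
    [Module K V] [LinearOrder κ] {v : κ → V} (s : Finset κ)
    (hv : ∀ j ∈ s, v j ∉ Submodule.span K (v '' Set.Iio j)) :
    LinearIndepOn K v (s : Set κ) := by
  induction s using Finset.induction_on_max with
  | empty => simp only [coe_empty]; exact linearIndepOn_empty K v
  | insert a s hlt ih =>
    rw [coe_insert, linearIndepOn_insert fun ha => (hlt a ha).false]
    refine ⟨ih fun j hj => hv j (mem_insert_of_mem hj), fun hspan => ?_⟩
    exact hv a (mem_insert_self a s) (Submodule.span_mono (Set.image_mono hlt) hspan)

theorem Matrix.mul_left_surjective_of_linearIndependent_row {K ι m n : Type*} [Field K]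
    [Fintype ι] [Fintype m] {A : Matrix ι m K} (hA : LinearIndependent K A.row) :
    Function.Surjective fun M : Matrix m n K => A * M := by
  classical
  have hrange : LinearMap.range A.mulVecLin = ⊤ :=
    Submodule.eq_top_of_finrank_eq <| by
      rw [← Matrix.rank, hA.rank_matrix, Module.finrank_fintype_fun_eq_card]
  obtain ⟨B, hB⟩ :=
    mulVec_surjective_iff_exists_right_inverse.1 (LinearMap.range_eq_top.1 hrange)
  exact fun X => ⟨B * X, by simp only [← Matrix.mul_assoc, hB, Matrix.one_mul]⟩

theorem AddMonoidHom.card_filter_mem_mul_card_of_surjective {G H : Type*} [AddGroup G]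
    [Fintype G] [AddGroup H] [Fintype H] [DecidableEq H] (f : G →+ H)
    (hf : Function.Surjective f) (s : Finset H) :
    #{g | f g ∈ s} * Fintype.card H = Fintype.card G * #s := by
  set k := #{g | f g = 0}
  have hfiber : ∀ b, #{g | f g = b} = k := fun b =>
    AddMonoidHom.card_fiber_eq_of_mem_range f (hf b) (hf 0)
  have hs : #{g | f g ∈ s} = #s * k := by
    rw [← sum_card_fiberwise_eq_card_filter, sum_const_nat fun b _ => hfiber b]
  have huniv : Fintype.card G = Fintype.card H * k := by
    rw [← card_univ, card_eq_sum_card_fiberwise (t := univ) (f := f) fun _ _ => mem_univ _,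
      sum_const_nat fun b _ => hfiber b, card_univ]
  rw [hs, huniv]
  ring

theorem card_filter_forall_pi {ι : Type*} [Fintype ι] [DecidableEq ι] {α : ι → Type*}
    [∀ i, Fintype (α i)] (p : ∀ i, α i → Prop) [∀ i, DecidablePred (p i)]
    [DecidablePred fun f : ∀ i, α i => ∀ i, p i (f i)] :
    #{f : ∀ i, α i | ∀ i, p i (f i)} = ∏ i, #{a | p i a} := by
  rw [← Fintype.card_subtype, Fintype.card_congr Equiv.subtypePiEquivPi, Fintype.card_pi]
  simp only [Fintype.card_subtype]

section RandomMatrices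

variable {K m n : Type*} [Field K] [Fintype K] [Fintype m] [DecidableEq m] [Fintype n]
  [DecidableEq n]

theorem card_filter_forall_vecMul_of_linearIndepOn {κ : Type*} {v : κ → m → K} {T : Finset κ}
    (hv : LinearIndepOn K v (T : Set κ)) (P : (n → K) → Prop) [DecidablePred P] :
    #{M : Matrix m n K | ∀ j ∈ T, P (v j ᵥ* M)} * Fintype.card (n → K) ^ #T
      = Fintype.card (Matrix m n K) * #{u | P u} ^ #T := by
  classical
  let A : Matrix T m K := Matrix.of fun j => v j
  let f : Matrix m n K →+ (T → n → K) := AddMonoidHom.mk' (A * ·) (Matrix.mul_add A)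
  have hf : Function.Surjective f := Matrix.mul_left_surjective_of_linearIndependent_row hv
  have hcount := f.card_filter_mem_mul_card_of_surjective hf (Fintype.piFinset fun _ => {u | P u})
  rw [Fintype.card_fun, Fintype.card_piFinset, prod_const, card_univ, Fintype.card_coe] at hcount
  convert hcount using 3
  ext M
  simp only [mem_filter, mem_univ, true_and, Fintype.mem_piFinset, Subtype.forall]
  rfl

variable {ι : Type*} [Fintype ι] [DecidableEq ι]

theorem card_filter_forall_mem_forall_mem_vecMul_eq_prod {κ : Type*} [LinearOrder κ]
    {c : κ → ι → m → K} {S : κ → Finset ι}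
    (hc : ∀ j, ∀ i ∈ S j, c j i ∉ Submodule.span K ((c · i) '' Set.Iio j))
    (P : ι → (n → K) → Prop) [∀ i, DecidablePred (P i)] (A : Finset κ)
    [DecidablePred fun G : ι → Matrix m n K => ∀ j ∈ A, ∀ i ∈ S j, P i (c j i ᵥ* G i)] :
    (#{G : ι → Matrix m n K | ∀ j ∈ A, ∀ i ∈ S j, P i (c j i ᵥ* G i)} : ℝ)
      = Fintype.card (Matrix m n K) ^ Fintype.card ι
        * ∏ j ∈ A, ∏ i ∈ S j, (#{u | P i u} : ℝ) / Fintype.card (n → K) := by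
  set T : ι → Finset κ := fun i => {j ∈ A | i ∈ S j}
  set ρ : ι → ℝ := fun i => #{u | P i u} / Fintype.card (n → K)
  have hcoord : ∀ i, (#{M : Matrix m n K | ∀ j ∈ T i, P i (c j i ᵥ* M)} : ℝ)
      = Fintype.card (Matrix m n K) * ρ i ^ #(T i) := by
    intro i
    have hli := linearIndepOn_of_notMem_span_image_Iio (T i) fun j hj => hc j i (mem_filter.1 hj).2
    have hcount := card_filter_forall_vecMul_of_linearIndepOn hli (P i)
    rw [div_pow, mul_div_assoc', eq_div_iff (by positivity)]
    exact_mod_cast hcount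
  have hsplit : #{G : ι → Matrix m n K | ∀ j ∈ A, ∀ i ∈ S j, P i (c j i ᵥ* G i)}
      = ∏ i, #{M : Matrix m n K | ∀ j ∈ T i, P i (c j i ᵥ* M)} := by
    rw [← card_filter_forall_pi fun i (M : Matrix m n K) => ∀ j ∈ T i, P i (c j i ᵥ* M)]
    congr 1
    ext G
    simp only [T, mem_filter, mem_univ, true_and, and_imp]
    exact ⟨fun h i j hj hi => h j hj i hi, fun h j hj i hi => h i j hj hi⟩
  have hregroup : ∏ i, ρ i ^ #(T i) = ∏ j ∈ A, ∏ i ∈ S j, ρ i := by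
    rw [prod_comm' (t' := univ) (s' := T) fun j i => by simp [T]]
    simp only [prod_const]
  rw [hsplit]
  push_cast
  rw [prod_congr rfl fun i _ => hcoord i, prod_mul_distrib, prod_const, card_univ, hregroup]

theorem card_filter_forall_mem_vecMul_eq_prod {v : ι → m → K} {S : Finset ι}
    (hv : ∀ i ∈ S, v i ≠ 0) (P : ι → (n → K) → Prop) [∀ i, DecidablePred (P i)]
    [DecidablePred fun G : ι → Matrix m n K => ∀ i ∈ S, P i (v i ᵥ* G i)] :
    (#{G : ι → Matrix m n K | ∀ i ∈ S, P i (v i ᵥ* G i)} : ℝ)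
      = Fintype.card (Matrix m n K) ^ Fintype.card ι
        * ∏ i ∈ S, (#{u | P i u} : ℝ) / Fintype.card (n → K) := by
  -- `(v, S)` is an independent tuple with the single index `()`.
  have hc : ∀ j : Unit, ∀ i ∈ S, v i ∉ Submodule.span K ((fun _ => v i) '' Set.Iio j) := by
    simpa using hv
  convert card_filter_forall_mem_forall_mem_vecMul_eq_prod hc P univ using 3 <;> simp

end RandomMatrices

open scoped Classical

theorem stmt_18_general {F : Type*} [Field F] [Fintype F] (n N J : ℕ)
    (c : Fin J → Fin N → (Fin n → F))
    (S : Fin J → Finset (Fin N))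
    (hindep : ∀ j : Fin J, ∀ i ∈ S j,
      c j i ∉ Submodule.span F {x : Fin n → F | ∃ j' : Fin J, j' < j ∧ x = c j' i})
    (y : Fin N → Fin n → Option F) :
    ∀ A : Finset (Fin J),
      ((Finset.univ.filter (fun G : Fin N → Matrix (Fin n) (Fin n) F =>
          ∀ j ∈ A, ∀ i ∈ S j, ∀ p : Fin n, ∀ a : F,
            y i p = some a → Matrix.vecMul (c j i) (G i) p = a)).card : ℝ)
        * (Fintype.card (Fin N → Matrix (Fin n) (Fin n) F) : ℝ) ^ (A.card)
      = (∏ j ∈ A, ((Finset.univ.filter (fun G : Fin N → Matrix (Fin n) (Fin n) F =>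
          ∀ i ∈ S j, ∀ p : Fin n, ∀ a : F,
            y i p = some a → Matrix.vecMul (c j i) (G i) p = a)).card : ℝ))
        * (Fintype.card (Fin N → Matrix (Fin n) (Fin n) F) : ℝ) := by
  intro A
  let agrees : Fin N → (Fin n → F) → Prop := fun i u => ∀ p a, y i p = some a → u p = a
  have hc : ∀ j, ∀ i ∈ S j, c j i ∉ Submodule.span F ((c · i) '' Set.Iio j) := by
    simpa only [Set.image, Set.mem_Iio, eq_comm] using hindep
  have hne : ∀ j, ∀ i ∈ S j, c j i ≠ 0 := fun j i hi h0 =>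
    hindep j i hi (h0 ▸ Submodule.zero_mem _)
  rw [card_filter_forall_mem_forall_mem_vecMul_eq_prod hc agrees A,
    prod_congr rfl fun j _ => card_filter_forall_mem_vecMul_eq_prod (hne j) agrees,
    prod_mul_distrib, prod_const, Fintype.card_fun (α := Fin N)]
  push_cast
  ring

/-- for a `(d, F_q)`-independent tuple of outer codewords with witness
sets `S₁,…,S_J` and independent uniformly random inner generator matrices
`G₁,…,G_N`, the events `E_j` = "`c^j G` agrees with `y` at all unerased positions in
the segments indexed by `S_j`" are mutually independent: for every subset `A` of the
indices, the probability of `⋂_{j∈A} E_j` equals the product of the probabilities. -/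
theorem stmt_18 {F : Type*} [Field F] [Fintype F] (n N J : ℕ)
    (c : Fin J → Fin N → (Fin n → F))
    (S : Fin J → Finset (Fin N)) (d : Fin J → ℕ) (hSd : ∀ j, (S j).card = d j)
    (hindep : ∀ j : Fin J, ∀ i ∈ S j,
      c j i ∉ Submodule.span F {x : Fin n → F | ∃ j' : Fin J, j' < j ∧ x = c j' i})
    (y : Fin N → Fin n → Option F) :
    ∀ A : Finset (Fin J),
      ((Finset.univ.filter (fun G : Fin N → Matrix (Fin n) (Fin n) F =>
          ∀ j ∈ A, ∀ i ∈ S j, ∀ p : Fin n, ∀ a : F,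
            y i p = some a → Matrix.vecMul (c j i) (G i) p = a)).card : ℝ)
        * (Fintype.card (Fin N → Matrix (Fin n) (Fin n) F) : ℝ) ^ (A.card)
      = (∏ j ∈ A, ((Finset.univ.filter (fun G : Fin N → Matrix (Fin n) (Fin n) F =>
          ∀ i ∈ S j, ∀ p : Fin n, ∀ a : F,
            y i p = some a → Matrix.vecMul (c j i) (G i) p = a)).card : ℝ))
        * (Fintype.card (Fin N → Matrix (Fin n) (Fin n) F) : ℝ) :=
  stmt_18_general n N J c S hindep y
end
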